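/- arXiv:1902.05678 — 6 statements merged into one kernel-verified Lean document; each statement's English description precedes it below -/
import Mathlib

section
/- There is no stable mechanism for MAX SMTI that is simultaneously man-strategy-proof and woman-strategy-proof. That is, for every mechanism S assigning to each SMTI instance a stable matching, there exist an instance I, a person p (a man or a woman), and an instance I' differing from I only in p's preference list, such that p prefers S(I') to S(I) with respect to p's preference list in I. -/
/-- An instance of the stable marriage problem with ties and incomplete lists (SMTI),
with men of type `α` and women of type `β`.  Each person's preference list is
represented by a rank function: `mpref m w = none` means woman `w` is unacceptable
to man `m`, and `mpref m w = some r` means `w` is acceptable with rank `r`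
(smaller rank = more preferred; equal ranks = a tie).  This encodes exactly a
total preorder on the set of acceptable partners. -/
structure SMInst (α β : Type) where
  mpref : α → β → Option ℕ
  wpref : β → α → Option ℕ

namespace SMInst

variable {α β : Type}

/-- Woman `w` is acceptable to man `m`. -/
def mAcc (I : SMInst α β) (m : α) (w : β) : Prop := (I.mpref m w).isSome

/-- Man `m` is acceptable to woman `w`. -/
def wAcc (I : SMInst α β) (w : β) (m : α) : Prop := (I.wpref w m).isSome

/-- Man `m` strictly prefers woman `w` to woman `w'`. -/
def mPref (I : SMInst α β) (m : α) (w w' : β) : Prop :=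
  ∃ r r', I.mpref m w = some r ∧ I.mpref m w' = some r' ∧ r < r'

/-- Woman `w` strictly prefers man `m` to man `m'`. -/
def wPref (I : SMInst α β) (w : β) (m m' : α) : Prop :=
  ∃ r r', I.wpref w m = some r ∧ I.wpref w m' = some r' ∧ r < r'

/-- `M` is a matching of `I`: all pairs mutually acceptable and no person in two pairs. -/
def IsMatching (I : SMInst α β) (M : Finset (α × β)) : Prop :=
  (∀ p ∈ M, I.mAcc p.1 p.2 ∧ I.wAcc p.2 p.1) ∧
  (∀ p ∈ M, ∀ q ∈ M, p.1 = q.1 → p = q) ∧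
  (∀ p ∈ M, ∀ q ∈ M, p.2 = q.2 → p = q)

/-- Man `m` is single (unmatched) in `M`. -/
def mSingle (M : Finset (α × β)) (m : α) : Prop := ∀ w, (m, w) ∉ M

/-- Woman `w` is single (unmatched) in `M`. -/
def wSingle (M : Finset (α × β)) (w : β) : Prop := ∀ m, (m, w) ∉ M

/-- `(m, w)` blocks `M` in instance `I`. -/
def Blocks (I : SMInst α β) (M : Finset (α × β)) (m : α) (w : β) : Prop :=
  I.mAcc m w ∧ I.wAcc w m ∧
  (mSingle M m ∨ ∃ w', (m, w') ∈ M ∧ I.mPref m w w') ∧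
  (wSingle M w ∨ ∃ m', (m', w) ∈ M ∧ I.wPref w m m')

/-- `M` is a (weakly) stable matching of `I`. -/
def IsStable (I : SMInst α β) (M : Finset (α × β)) : Prop :=
  I.IsMatching M ∧ ∀ m w, ¬ I.Blocks M m w

/-- Man `m` prefers matching `M'` to matching `M`, with respect to his list in `I`:
he is matched in `M'` to an acceptable partner, and he is either single in `M`
or strictly prefers his `M'`-partner to his `M`-partner. -/
def mPrefMatching (I : SMInst α β) (m : α) (M' M : Finset (α × β)) : Prop :=
  ∃ w, (m, w) ∈ M' ∧ I.mAcc m w ∧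
    (mSingle M m ∨ ∃ w', (m, w') ∈ M ∧ I.mPref m w w')

/-- Woman `w` prefers matching `M'` to matching `M`, with respect to her list in `I`. -/
def wPrefMatching (I : SMInst α β) (w : β) (M' M : Finset (α × β)) : Prop :=
  ∃ m, (m, w) ∈ M' ∧ I.wAcc w m ∧
    (wSingle M w ∨ ∃ m', (m', w) ∈ M ∧ I.wPref w m m')

/-- `I` and `I'` differ only in man `m`'s preference list. -/
def mDiffOnly (I I' : SMInst α β) (m : α) : Prop :=
  I.wpref = I'.wpref ∧ ∀ m', m' ≠ m → I.mpref m' = I'.mpref m'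

/-- `I` and `I'` differ only in woman `w`'s preference list. -/
def wDiffOnly (I I' : SMInst α β) (w : β) : Prop :=
  I.mpref = I'.mpref ∧ ∀ w', w' ≠ w → I.wpref w' = I'.wpref w'

/-- Men's lists contain no ties. -/
def MStrict (I : SMInst α β) : Prop :=
  ∀ m w w', I.mpref m w = I.mpref m w' → I.mAcc m w → w = w'

/-- Women's lists contain no ties. -/
def WStrict (I : SMInst α β) : Prop :=
  ∀ w m m', I.wpref w m = I.wpref w m' → I.wAcc w m → m = m'

/-- `I` is an SMI instance: no ties at all (all lists strictly ordered). -/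
def NoTies (I : SMInst α β) : Prop := I.MStrict ∧ I.WStrict

/-- `I` is an SMTI-1TM instance: ties may occur only in men's lists,
i.e. women's lists are strictly ordered. -/
def OneTM (I : SMInst α β) : Prop := I.WStrict

/-- `I'` is obtained from `I` by breaking ties: same acceptable sets, and every
strict preference of `I` is preserved in `I'` (so each person's list in `I'` is a
linear extension of the corresponding total preorder in `I`). -/
def Refines (I I' : SMInst α β) : Prop :=
  (∀ m w, I.mAcc m w ↔ I'.mAcc m w) ∧
  (∀ w m, I.wAcc w m ↔ I'.wAcc w m) ∧
  (∀ m w w', I.mPref m w w' → I'.mPref m w w') ∧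
  (∀ w m m', I.wPref w m m' → I'.wPref w m m')

end SMInst

namespace RothAux

open SMInst

/-- Boolean version of `mPref`. -/
def optLt (a b : Option ℕ) : Bool :=
  match a, b with
  | some r, some r' => r < r'
  | _, _ => false

lemma optLt_iff (a b : Option ℕ) :
    (∃ r r', a = some r ∧ b = some r' ∧ r < r') ↔ optLt a b = true := by
  cases a with
  | none => simp [optLt]
  | some r =>
    cases b with
    | none => simp [optLt]
    | some r' => simp [optLt]

instance {α β : Type} (I : SMInst α β) (m : α) (w w' : β) :
    Decidable (I.mPref m w w') :=
  decidable_of_iff _ (optLt_iff _ _).symm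

instance {α β : Type} (I : SMInst α β) (w : β) (m m' : α) :
    Decidable (I.wPref w m m') :=
  decidable_of_iff _ (optLt_iff _ _).symm

instance {α β : Type} (I : SMInst α β) (m : α) (w : β) :
    Decidable (I.mAcc m w) := by unfold SMInst.mAcc; infer_instance

instance {α β : Type} (I : SMInst α β) (w : β) (m : α) :
    Decidable (I.wAcc w m) := by unfold SMInst.wAcc; infer_instance

instance {α β : Type} [DecidableEq α] [DecidableEq β] [Fintype β]
    (M : Finset (α × β)) (m : α) : Decidable (SMInst.mSingle M m) := by
  unfold SMInst.mSingle; infer_instance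

instance {α β : Type} [DecidableEq α] [DecidableEq β] [Fintype α]
    (M : Finset (α × β)) (w : β) : Decidable (SMInst.wSingle M w) := by
  unfold SMInst.wSingle; infer_instance

instance {α β : Type} [DecidableEq α] [DecidableEq β] [Fintype α] [Fintype β]
    (I : SMInst α β) (M : Finset (α × β)) (m : α) (w : β) :
    Decidable (I.Blocks M m w) := by
  unfold SMInst.Blocks; infer_instance

instance {α β : Type} [DecidableEq α] [DecidableEq β]
    (I : SMInst α β) (M : Finset (α × β)) : Decidable (I.IsMatching M) := by
  unfold SMInst.IsMatching; infer_instance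

instance {α β : Type} [DecidableEq α] [DecidableEq β] [Fintype α] [Fintype β]
    (I : SMInst α β) (M : Finset (α × β)) : Decidable (I.IsStable M) := by
  unfold SMInst.IsStable; infer_instance

/-- The base instance: m0: w0>w1, m1: w1>w0, w0: m1>m0, w1: m0>m1. -/
def I0 : SMInst (Fin 2) (Fin 2) :=
  ⟨fun m w => if m = w then some 0 else some 1,
   fun w m => if m = w then some 1 else some 0⟩

/-- Woman 0 truncates her list to only man 1. -/
def Iw : SMInst (Fin 2) (Fin 2) :=
  ⟨I0.mpref,
   fun w m => if w = 0 then (if m = 1 then some 0 else none) else I0.wpref w m⟩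

/-- Man 0 truncates his list to only woman 0. -/
def Im : SMInst (Fin 2) (Fin 2) :=
  ⟨fun m w => if m = 0 then (if w = 0 then some 0 else none) else I0.mpref m w,
   I0.wpref⟩

def MA : Finset (Fin 2 × Fin 2) := {(0,0),(1,1)}
def MB : Finset (Fin 2 × Fin 2) := {(0,1),(1,0)}

lemma stable_I0 : ∀ M : Finset (Fin 2 × Fin 2), I0.IsStable M → M = MA ∨ M = MB := by
  decide

lemma stable_Iw : ∀ M : Finset (Fin 2 × Fin 2), Iw.IsStable M → M = MB := by
  decide

lemma stable_Im : ∀ M : Finset (Fin 2 × Fin 2), Im.IsStable M → M = MA := by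
  decide

end RothAux

/-- Roth's impossibility theorem for MAX SMTI: there is no stable mechanism that is
simultaneously man-strategy-proof and woman-strategy-proof.  For every stable
mechanism `S` there exist an instance `I` and an instance `I'` differing from `I`
only in one person's preference list such that that person prefers `S(I')` to `S(I)`
with respect to their list in `I`. -/
theorem no_strategy_proof_stable_mechanism_SMTI
    (S : ∀ n : ℕ, SMInst (Fin n) (Fin n) → Finset (Fin n × Fin n))
    (hstable : ∀ (n : ℕ) (I : SMInst (Fin n) (Fin n)), I.IsStable (S n I)) :
    (∃ (n : ℕ) (I I' : SMInst (Fin n) (Fin n)) (m : Fin n),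
        SMInst.mDiffOnly I I' m ∧ I.mPrefMatching m (S n I') (S n I)) ∨
    (∃ (n : ℕ) (I I' : SMInst (Fin n) (Fin n)) (w : Fin n),
        SMInst.wDiffOnly I I' w ∧ I.wPrefMatching w (S n I') (S n I)) := by

  classical
  open RothAux in
  rcases stable_I0 _ (hstable 2 I0) with h | h
  · -- S picks man-optimal MA; woman 0 can manipulate via Iw
    right
    refine ⟨2, I0, Iw, 0, ⟨rfl, ?_⟩, ?_⟩
    · intro w' hw'
      funext m
      simp [Iw, hw']
    · have hw := stable_Iw _ (hstable 2 Iw)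
      refine ⟨1, ?_, ?_, Or.inr ⟨0, ?_, ?_⟩⟩
      · rw [hw]; decide
      · decide
      · rw [h]; decide
      · decide
  · -- S picks woman-optimal MB; man 0 can manipulate via Im
    left
    refine ⟨2, I0, Im, 0, ⟨rfl, ?_⟩, ?_⟩
    · intro m' hm'
      funext w
      simp [Im, hm']
    · have hm := stable_Im _ (hstable 2 Im)
      refine ⟨0, ?_, ?_, Or.inr ⟨1, ?_, ?_⟩⟩
      · rw [hm]; decide
      · decide
      · rw [h]; decide
      · decide
end

section
/- MAX SMTI admits a man-strategy-proof 2-approximate-stable mechanism: there exists a mechanism S such that for every SMTI instance I, S(I) is a stable matching with 2·|S(I)| ≥ |M_opt| for every stable matching M_opt of I, and no man can, by submitting a falsified preference list while all other lists are unchanged, obtain an outcome he prefers with respect to his true list. -/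
/-!
Ties are broken by a fixed rule (the partner's index). A matching stable for the tie-broken
instance is stable for the original one, and a stable matching is maximal, so it has at least
half as many pairs as any matching. The mechanism runs men-proposing deferred acceptance on the
tie-broken instance; a profitable lie of a man in the original instance is one in the
tie-broken instance, so it suffices that deferred acceptance is man-strategy-proof for strict
lists (Dubins–Freedman). If a lie gets `m` the woman `w`, then listing only `w` gets him `w` as
well, by man-optimality. The matching so obtained is preferred by `m` to the truthful outcome,
so by the Blocking Lemma of Gale and Sotomayor it is blocked, in the true instance, by a pair
whose man is not `m`; that pair also blocks it in the instance where `m` lists only `w`.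
-/

open Finset

theorem Finset.card_filter_mem_image_le {ι κ : Type*} [DecidableEq κ] {s t : Finset ι}
    {f : ι → κ} (hf : Set.InjOn f s) : (s.filter fun x => f x ∈ t.image f).card ≤ t.card :=
  (card_le_card_of_injOn f (fun _ hx => (mem_filter.1 hx).2)
    (hf.mono (filter_subset _ _))).trans card_image_le

namespace SMInst

open scoped Classical

variable {α β : Type}

section Preferences

variable {I : SMInst α β} {m : α} {a b c : β}

def swap (I : SMInst α β) : SMInst β α := ⟨I.wpref, I.mpref⟩

theorem mPref.mAcc_left (h : I.mPref m a b) : I.mAcc m a := by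
  obtain ⟨r, -, ha, -⟩ := h
  simp [mAcc, ha]

theorem mPref_irrefl : ¬ I.mPref m a a := by
  rintro ⟨r, r', h, h', hlt⟩
  rw [h, Option.some_inj] at h'
  exact hlt.ne h'

theorem mPref.trans (h₁ : I.mPref m a b) (h₂ : I.mPref m b c) : I.mPref m a c := by
  obtain ⟨r, s, ha, hb, hrs⟩ := h₁
  obtain ⟨s', t, hb', hc, hst⟩ := h₂
  rw [hb, Option.some_inj] at hb'
  exact ⟨r, t, ha, hc, hrs.trans (hb' ▸ hst)⟩

theorem mPref.trans_not_mPref (h : I.mPref m a b) (hc : I.mAcc m c) (hcb : ¬ I.mPref m c b) :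
    I.mPref m a c := by
  obtain ⟨r, s, ha, hb, hrs⟩ := h
  obtain ⟨t, hct⟩ := Option.isSome_iff_exists.1 hc
  exact ⟨r, t, ha, hct, hrs.trans_le (not_lt.1 fun hts => hcb ⟨t, s, hct, hb, hts⟩)⟩

theorem MStrict.mPref_or_mPref (hI : I.MStrict) (ha : I.mAcc m a) (hb : I.mAcc m b)
    (hab : a ≠ b) : I.mPref m a b ∨ I.mPref m b a := by
  obtain ⟨r, hr⟩ := Option.isSome_iff_exists.1 ha
  obtain ⟨s, hs⟩ := Option.isSome_iff_exists.1 hb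
  rcases lt_trichotomy r s with h | rfl | h
  · exact Or.inl ⟨r, s, hr, hs, h⟩
  · exact absurd (hI m a b (hr.trans hs.symm) ha) hab
  · exact Or.inr ⟨s, r, hs, hr, h⟩

theorem wellFounded_mPref (I : SMInst α β) (m : α) : WellFounded (I.mPref m) :=
  Subrelation.wf (fun {_ _} ⟨_, _, ha, hb, h⟩ => by simpa [InvImage, ha, hb] using h)
    (InvImage.wf (fun w => (I.mpref m w).getD 0) wellFounded_lt)

variable {w : β} {x y z : α}

theorem wPref.wAcc_left (h : I.wPref w x y) : I.wAcc w x := mPref.mAcc_left (I := I.swap) h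

theorem wPref_irrefl : ¬ I.wPref w x x := mPref_irrefl (I := I.swap)

theorem wPref.trans (h₁ : I.wPref w x y) (h₂ : I.wPref w y z) : I.wPref w x z :=
  mPref.trans (I := I.swap) h₁ h₂

theorem WStrict.wPref_or_wPref (hI : I.WStrict) (hx : I.wAcc w x) (hy : I.wAcc w y)
    (hxy : x ≠ y) : I.wPref w x y ∨ I.wPref w y x :=
  MStrict.mPref_or_mPref (I := I.swap) hI hx hy hxy

end Preferences

section Matchings

variable {I I' : SMInst α β} {M M' : Finset (α × β)} {m a : α} {b : β}

theorem IsMatching.card_le_two_mul (hM' : I.IsMatching M') (hM : I.IsStable M) :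
    M'.card ≤ 2 * M.card := by
  have hcover : M' ⊆ M'.filter (fun p => p.1 ∈ M.image Prod.fst) ∪
      M'.filter (fun p => p.2 ∈ M.image Prod.snd) := by
    intro p hp
    by_contra hp'
    refine hM.2 p.1 p.2 ⟨(hM'.1 p hp).1, (hM'.1 p hp).2, Or.inl fun w hw => hp' ?_,
      Or.inl fun m hm => hp' ?_⟩
    · exact mem_union_left _ (mem_filter.2 ⟨hp, mem_image.2 ⟨_, hw, rfl⟩⟩)
    · exact mem_union_right _ (mem_filter.2 ⟨hp, mem_image.2 ⟨_, hm, rfl⟩⟩)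
  calc M'.card ≤ _ := card_le_card hcover
    _ ≤ _ := card_union_le _ _
    _ ≤ M.card + M.card :=
      add_le_add (card_filter_mem_image_le fun p hp q hq => hM'.2.1 p hp q hq)
        (card_filter_mem_image_le fun p hp q hq => hM'.2.2 p hp q hq)
    _ = 2 * M.card := (two_mul _).symm

theorem Refines.blocks (h : I.Refines I') (hb : I.Blocks M a b) : I'.Blocks M a b := by
  obtain ⟨hm, hw, hmside, hwside⟩ := hb
  exact ⟨(h.1 a b).1 hm, (h.2.1 b a).1 hw,
    hmside.imp_right fun ⟨w', hw', hp⟩ => ⟨w', hw', h.2.2.1 _ _ _ hp⟩,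
    hwside.imp_right fun ⟨m', hm', hp⟩ => ⟨m', hm', h.2.2.2 _ _ _ hp⟩⟩

theorem Refines.isStable (h : I.Refines I') (hM : I'.IsStable M) : I.IsStable M :=
  ⟨⟨fun p hp => ⟨(h.1 _ _).2 (hM.1.1 p hp).1, (h.2.1 _ _).2 (hM.1.1 p hp).2⟩, hM.1.2⟩,
    fun a b hb => hM.2 a b (h.blocks hb)⟩

theorem Refines.mPrefMatching (h : I.Refines I') (hm : I.mPrefMatching m M' M) :
    I'.mPrefMatching m M' M := by
  obtain ⟨w, hw, hacc, hside⟩ := hm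
  exact ⟨w, hw, (h.1 m w).1 hacc,
    hside.imp_right fun ⟨w', hw', hp⟩ => ⟨w', hw', h.2.2.1 _ _ _ hp⟩⟩

theorem mDiffOnly.symm (h : I.mDiffOnly I' m) : I'.mDiffOnly I m :=
  ⟨h.1.symm, fun m' hm' => (h.2 m' hm').symm⟩

theorem mDiffOnly.blocks_iff (h : I.mDiffOnly I' m) (ha : a ≠ m) :
    I.Blocks M a b ↔ I'.Blocks M a b := by
  simp only [Blocks, mAcc, wAcc, mPref, wPref, h.1, h.2 a ha]

theorem mDiffOnly.isMatching (h : I.mDiffOnly I' m) (hM : I.IsMatching M)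
    (hm : ∀ w, (m, w) ∈ M → I'.mAcc m w) : I'.IsMatching M := by
  refine ⟨fun p hp => ⟨?_, by simpa only [wAcc, h.1] using (hM.1 p hp).2⟩, hM.2⟩
  by_cases hpm : p.1 = m
  · exact hpm ▸ hm p.2 (hpm ▸ hp)
  · simpa only [mAcc, h.2 p.1 hpm] using (hM.1 p hp).1

theorem mSingle_or_mPref_of_not_mPrefMatching {μ : Finset (α × β)} {y : α} {w : β}
    (hI : I.MStrict) (hμ : I.IsMatching μ) (hM : I.IsMatching M) (hy : ¬ I.mPrefMatching y μ M)
    (hacc : I.mAcc y w) (hyw : (y, w) ∉ μ)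
    (hyM : mSingle M y ∨ ∃ u, (y, u) ∈ M ∧ ¬ I.mPref y u w) :
    mSingle μ y ∨ ∃ b, (y, b) ∈ μ ∧ I.mPref y w b := by
  by_cases hs : mSingle μ y
  · exact Or.inl hs
  obtain ⟨b, hb⟩ : ∃ b, (y, b) ∈ μ := by simpa [mSingle] using hs
  have hbacc := (hμ.1 _ hb).1
  rcases hyM with hyM | ⟨u, hu, huw⟩
  · exact absurd ⟨b, hb, hbacc, Or.inl hyM⟩ hy
  have hwb : w ≠ b := by rintro rfl; exact hyw hb
  refine Or.inr ⟨b, hb, (hI.mPref_or_mPref hacc hbacc hwb).resolve_right fun hbw => hy ?_⟩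
  exact ⟨b, hb, hbacc, Or.inr ⟨u, hu, hbw.trans_not_mPref (hM.1 _ hu).1 huw⟩⟩

end Matchings

section TieBreaking

variable {l : ℕ} {f : Fin l → Option ℕ} {i j : Fin l}

/-- Ties are broken by the partner's index: rank `r` of partner `i` becomes `l * r + i`. -/
def breakTies (f : Fin l → Option ℕ) : Fin l → Option ℕ := fun i => (f i).map (l * · + i)

theorem isSome_breakTies : (breakTies f i).isSome = (f i).isSome := by
  simp [breakTies]

theorem breakTies_pref (h : ∃ r s, f i = some r ∧ f j = some s ∧ r < s) :
    ∃ r s, breakTies f i = some r ∧ breakTies f j = some s ∧ r < s := by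
  obtain ⟨r, s, hi, hj, hrs⟩ := h
  refine ⟨l * r + i, l * s + j, by simp [breakTies, hi], by simp [breakTies, hj], ?_⟩
  calc l * r + i < l * (r + 1) := by rw [Nat.mul_succ]; omega
    _ ≤ l * s + j := (Nat.mul_le_mul_left l hrs).trans (Nat.le_add_right _ _)

theorem eq_of_breakTies_eq (h : breakTies f i = breakTies f j) (hi : (f i).isSome) : i = j := by
  obtain ⟨r, hr⟩ := Option.isSome_iff_exists.1 hi
  cases hs : f j with
  | none => simp [breakTies, hr, hs] at h
  | some s =>
    simp only [breakTies, hr, hs, Option.map_some, Option.some_inj] at h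
    ext
    simpa [Nat.mul_add_mod, Nat.mod_eq_of_lt i.isLt, Nat.mod_eq_of_lt j.isLt] using
      congrArg (· % l) h

def tieBreak {k : ℕ} (I : SMInst (Fin k) (Fin l)) : SMInst (Fin k) (Fin l) :=
  ⟨fun m => breakTies (I.mpref m), fun w => breakTies (I.wpref w)⟩

variable {k : ℕ} {I I' : SMInst (Fin k) (Fin l)} {m : Fin k}

theorem refines_tieBreak (I : SMInst (Fin k) (Fin l)) : I.Refines I.tieBreak :=
  ⟨fun _ _ => by simp only [mAcc, tieBreak, isSome_breakTies],
    fun _ _ => by simp only [wAcc, tieBreak, isSome_breakTies],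
    fun _ _ _ => breakTies_pref, fun _ _ _ => breakTies_pref⟩

theorem noTies_tieBreak (I : SMInst (Fin k) (Fin l)) : I.tieBreak.NoTies :=
  ⟨fun _ _ _ h hacc => eq_of_breakTies_eq h ((I.refines_tieBreak.1 _ _).2 hacc),
    fun _ _ _ h hacc => eq_of_breakTies_eq h ((I.refines_tieBreak.2.1 _ _).2 hacc)⟩

theorem mDiffOnly.tieBreak (h : I.mDiffOnly I' m) : I.tieBreak.mDiffOnly I'.tieBreak m :=
  ⟨by simp only [SMInst.tieBreak, h.1],
    fun m' hm' => by simp only [SMInst.tieBreak, h.2 m' hm']⟩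

end TieBreaking

section DeferredAcceptance

variable {J : SMInst α β} {R R' : Finset (α × β)} {m y : α} {w w' : β} {p q : α × β} {s t : ℕ}

/-- A state of deferred acceptance is the set `R` of pairs `(m, w)` in which `w` has rejected `m`;
in it, `m` proposes to his favourite woman who has not rejected him. -/
def Proposes (J : SMInst α β) (R : Finset (α × β)) (m : α) (w : β) : Prop :=
  J.mAcc m w ∧ (m, w) ∉ R ∧ ∀ w', J.mPref m w' w → (m, w') ∈ R

theorem Proposes.of_subset (h : J.Proposes R m w) (hR : R ⊆ R') (hw : (m, w) ∉ R') :
    J.Proposes R' m w :=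
  ⟨h.1, hw, fun w' hw' => hR (h.2.2 w' hw')⟩

theorem Proposes.not_mPref_of_subset (h : J.Proposes R m w) (h' : J.Proposes R' m w')
    (hR : R ⊆ R') : ¬ J.mPref m w' w :=
  fun hw' => h'.2.1 (hR (h.2.2 w' hw'))

theorem Proposes.unique (hJ : J.MStrict) (h : J.Proposes R m w) (h' : J.Proposes R m w') :
    w = w' := by
  by_contra hne
  rcases hJ.mPref_or_mPref h.1 h'.1 hne with hp | hp
  · exact h.2.1 (h'.2.2 w hp)
  · exact h'.2.1 (h.2.2 w' hp)

theorem exists_proposes (hw : J.mAcc m w) (hR : (m, w) ∉ R) : ∃ w', J.Proposes R m w' := by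
  obtain ⟨w', ⟨hacc, hR'⟩, hmin⟩ :=
    (J.wellFounded_mPref m).has_min {w | J.mAcc m w ∧ (m, w) ∉ R} ⟨w, hw, hR⟩
  exact ⟨w', hacc, hR', fun w'' h'' => by_contra fun hn => hmin w'' ⟨h''.mAcc_left, hn⟩ h''⟩

def IsRejectable (J : SMInst α β) (R : Finset (α × β)) (m : α) (w : β) : Prop :=
  J.Proposes R m w ∧ (¬ J.wAcc w m ∨ ∃ m', J.Proposes R m' w ∧ J.wPref w m' m)

noncomputable def rejectionStep (J : SMInst α β) (R : Finset (α × β)) : Finset (α × β) :=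
  if h : ∃ p : α × β, J.IsRejectable R p.1 p.2 then insert h.choose R else R

theorem subset_rejectionStep : R ⊆ J.rejectionStep R := by
  unfold rejectionStep
  split_ifs
  exacts [subset_insert _ _, Subset.rfl]

theorem rejectionStep_eq_insert (hp : p ∈ J.rejectionStep R) (hpR : p ∉ R) :
    J.IsRejectable R p.1 p.2 ∧ J.rejectionStep R = insert p R := by
  unfold rejectionStep at hp ⊢
  split_ifs at hp ⊢ with h
  · obtain rfl | hp := mem_insert.1 hp
    exacts [⟨h.choose_spec, rfl⟩, absurd hp hpR]
  · exact absurd hp hpR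

theorem rejectionStep_ne_self (h : J.IsRejectable R m w) : J.rejectionStep R ≠ R := by
  have hex : ∃ p : α × β, J.IsRejectable R p.1 p.2 := ⟨(m, w), h⟩
  rw [rejectionStep, dif_pos hex]
  intro heq
  have hmem := mem_insert_self hex.choose R
  rw [heq] at hmem
  exact hex.choose_spec.1.2.1 hmem

noncomputable def rejections (J : SMInst α β) (t : ℕ) : Finset (α × β) :=
  J.rejectionStep^[t] ∅

theorem rejections_succ (J : SMInst α β) (t : ℕ) :
    J.rejections (t + 1) = J.rejectionStep (J.rejections t) :=
  Function.iterate_succ_apply' _ _ _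

theorem monotone_rejections (J : SMInst α β) : Monotone J.rejections :=
  monotone_nat_of_le_succ fun t => (J.rejections_succ t).symm ▸ subset_rejectionStep

theorem rejections_eq_of_rejectionStep_eq
    (h : J.rejectionStep (J.rejections t) = J.rejections t) (hts : t ≤ s) :
    J.rejections s = J.rejections t := by
  obtain ⟨k, rfl⟩ := Nat.exists_eq_add_of_le hts
  rw [rejections, add_comm, Function.iterate_add_apply]
  exact Function.IsFixedPt.iterate h k

def RejectedAt (J : SMInst α β) (s : ℕ) (p : α × β) : Prop :=
  p ∉ J.rejections s ∧ p ∈ J.rejections (s + 1)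

theorem exists_rejectedAt (h : p ∈ J.rejections t) : ∃ s < t, J.RejectedAt s p := by
  induction t with
  | zero => simp [rejections] at h
  | succ t ih =>
    by_cases hp : p ∈ J.rejections t
    · obtain ⟨s, hst, hs⟩ := ih hp
      exact ⟨s, hst.trans t.lt_succ_self, hs⟩
    · exact ⟨t, t.lt_succ_self, hp, h⟩

theorem RejectedAt.isRejectable (h : J.RejectedAt s p) :
    J.IsRejectable (J.rejections s) p.1 p.2 :=
  (rejectionStep_eq_insert (J.rejections_succ s ▸ h.2) h.1).1

theorem RejectedAt.eq (h : J.RejectedAt s p) (h' : J.RejectedAt s q) : p = q := by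
  have hins := (rejectionStep_eq_insert (J.rejections_succ s ▸ h.2) h.1).2
  have hq := J.rejections_succ s ▸ h'.2
  rw [hins] at hq
  exact ((mem_insert.1 hq).resolve_right h'.1).symm

theorem exists_proposes_rejectionStep (h : J.Proposes R y w) (hacc : J.wAcc w y) :
    ∃ y', J.Proposes (J.rejectionStep R) y' w ∧ (y' = y ∨ J.wPref w y' y) := by
  by_cases hy : (y, w) ∈ J.rejectionStep R
  · obtain ⟨⟨-, hcause⟩, hins⟩ := rejectionStep_eq_insert hy h.2.1
    obtain ⟨y', hy', hpref⟩ := hcause.resolve_left (not_not.2 hacc)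
    refine ⟨y', hy'.of_subset subset_rejectionStep fun hy'R => ?_, Or.inr hpref⟩
    rw [hins, mem_insert] at hy'R
    obtain h | h := hy'R
    · exact wPref_irrefl (congrArg Prod.fst h ▸ hpref)
    · exact hy'.2.1 h
  · exact ⟨y, h.of_subset subset_rejectionStep hy, Or.inl rfl⟩

theorem exists_proposes_rejections (h : J.Proposes (J.rejections s) y w) (hacc : J.wAcc w y)
    (hst : s ≤ t) :
    ∃ y', J.Proposes (J.rejections t) y' w ∧ (y' = y ∨ J.wPref w y' y) := by
  induction t, hst using Nat.le_induction with
  | base => exact ⟨y, h, Or.inl rfl⟩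
  | succ t _ ih =>
    obtain ⟨y', hy', hy'y⟩ := ih
    have hacc' : J.wAcc w y' := by
      rcases hy'y with rfl | hp
      exacts [hacc, hp.wAcc_left]
    obtain ⟨y'', hy'', hy''y'⟩ := exists_proposes_rejectionStep hy' hacc'
    refine ⟨y'', J.rejections_succ t ▸ hy'', ?_⟩
    rcases hy''y' with rfl | hp
    · exact hy'y
    · rcases hy'y with rfl | hp'
      exacts [Or.inr hp, Or.inr (hp.trans hp')]

theorem exists_proposes_wPref (h : p ∈ J.rejections (s + 1)) (hacc : J.wAcc p.2 p.1)
    (hst : s ≤ t) : ∃ y, J.Proposes (J.rejections t) y p.2 ∧ J.wPref p.2 y p.1 := by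
  obtain ⟨r, hrs, hr⟩ := exists_rejectedAt h
  obtain ⟨y, hy, hpref⟩ := hr.isRejectable.2.resolve_left (not_not.2 hacc)
  obtain ⟨y', hy', hy'y⟩ := exists_proposes_rejections hy hpref.wAcc_left
    ((Nat.lt_succ_iff.1 hrs).trans hst)
  rcases hy'y with rfl | hp
  exacts [⟨y', hy', hpref⟩, ⟨y', hy', hp.trans hpref⟩]

theorem disjoint_rejections_of_isStable (hJ : J.MStrict) {ν : Finset (α × β)}
    (hν : J.IsStable ν) (t : ℕ) : Disjoint (J.rejections t) ν := by
  induction t with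
  | zero => simp [rejections]
  | succ t ih =>
    refine disjoint_left.2 fun ⟨m, w⟩ hR hmw => ?_
    have hrej : J.RejectedAt t (m, w) := ⟨fun h => disjoint_left.1 ih h hmw, hR⟩
    obtain ⟨y, hy, hpref⟩ := hrej.isRejectable.2.resolve_left (not_not.2 (hν.1.1 _ hmw).2)
    refine hν.2 y w ⟨hy.1, hpref.wAcc_left, ?_, Or.inr ⟨m, hmw, hpref⟩⟩
    by_cases hs : mSingle ν y
    · exact Or.inl hs
    obtain ⟨w', hw'⟩ : ∃ w', (y, w') ∈ ν := by simpa [mSingle] using hs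
    have hne : w ≠ w' := by
      rintro rfl
      exact wPref_irrefl (congrArg Prod.fst (hν.1.2.2 _ hw' _ hmw rfl) ▸ hpref)
    refine Or.inr ⟨w', hw', (hJ.mPref_or_mPref hy.1 (hν.1.1 _ hw').1 hne).resolve_right
      fun hp => disjoint_left.1 ih (hy.2.2 w' hp) hw'⟩

end DeferredAcceptance

section Outcome

variable [Fintype α] [Fintype β] {J : SMInst α β} {x : α} {w : β}

noncomputable def finalRejections (J : SMInst α β) : Finset (α × β) :=
  J.rejections (Fintype.card (α × β))

noncomputable def deferredAcceptance (J : SMInst α β) : Finset (α × β) :=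
  univ.filter fun p => J.Proposes J.finalRejections p.1 p.2

theorem mem_deferredAcceptance :
    (x, w) ∈ J.deferredAcceptance ↔ J.Proposes J.finalRejections x w := by
  simp [deferredAcceptance]

/-- Each effective step rejects a new pair, so the run is stationary after `|α × β|` steps. -/
theorem rejectionStep_finalRejections :
    J.rejectionStep J.finalRejections = J.finalRejections := by
  by_contra hne
  have hgrow : ∀ t ≤ Fintype.card (α × β), t ≤ (J.rejections t).card := by
    intro t ht
    induction t with
    | zero => exact Nat.zero_le _
    | succ t ih =>
      have hlt : J.rejections t ⊂ J.rejections (t + 1) := by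
        refine Finset.ssubset_iff_subset_ne.2
          ⟨J.monotone_rejections t.le_succ, fun heq => hne ?_⟩
        have hfix : J.rejectionStep (J.rejections t) = J.rejections t := by
          rw [← rejections_succ, heq]
        rw [finalRejections, rejections_eq_of_rejectionStep_eq hfix (by omega), hfix]
      exact (ih (by omega)).trans_lt (card_lt_card hlt)
  have huniv : J.finalRejections = univ :=
    eq_univ_of_card _ ((card_le_univ _).antisymm (hgrow _ le_rfl))
  exact hne (by rw [huniv]; exact (subset_univ _).antisymm subset_rejectionStep)

theorem not_isRejectable_finalRejections : ¬ J.IsRejectable J.finalRejections x w :=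
  fun h => rejectionStep_ne_self h rejectionStep_finalRejections

theorem rejections_subset_finalRejections (t : ℕ) : J.rejections t ⊆ J.finalRejections := by
  rcases le_total t (Fintype.card (α × β)) with ht | ht
  · exact J.monotone_rejections ht
  · exact (rejections_eq_of_rejectionStep_eq rejectionStep_finalRejections ht).le

theorem isMatching_deferredAcceptance (hJ : J.NoTies) : J.IsMatching J.deferredAcceptance := by
  refine ⟨fun ⟨x, w⟩ hxw => ?_, fun ⟨x, w⟩ hxw ⟨x', w'⟩ hxw' hx => ?_,
    fun ⟨x, w⟩ hxw ⟨x', w'⟩ hxw' hw => ?_⟩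
  · have h := mem_deferredAcceptance.1 hxw
    exact ⟨h.1, by_contra fun hacc => not_isRejectable_finalRejections ⟨h, Or.inl hacc⟩⟩
  · obtain rfl : x = x' := hx
    rw [(mem_deferredAcceptance.1 hxw).unique hJ.1 (mem_deferredAcceptance.1 hxw')]
  · obtain rfl : w = w' := hw
    have h := mem_deferredAcceptance.1 hxw
    have h' := mem_deferredAcceptance.1 hxw'
    have hacc : ∀ {z}, J.Proposes J.finalRejections z w → J.wAcc w z := fun hz =>
      by_contra fun hacc => not_isRejectable_finalRejections ⟨hz, Or.inl hacc⟩
    by_contra hne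
    rcases hJ.2.wPref_or_wPref (hacc h) (hacc h') fun hxx' => hne (by rw [hxx']) with hp | hp
    · exact not_isRejectable_finalRejections ⟨h', Or.inr ⟨x, h, hp⟩⟩
    · exact not_isRejectable_finalRejections ⟨h, Or.inr ⟨x', h', hp⟩⟩

theorem mem_finalRejections (hacc : J.mAcc x w)
    (h : mSingle J.deferredAcceptance x ∨
      ∃ w', (x, w') ∈ J.deferredAcceptance ∧ J.mPref x w w') :
    (x, w) ∈ J.finalRejections := by
  by_contra hxw
  obtain ⟨w', hw'⟩ := exists_proposes hacc hxw
  rcases h with hs | ⟨w'', hw'', hpref⟩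
  · exact hs w' (mem_deferredAcceptance.2 hw')
  · exact hxw ((mem_deferredAcceptance.1 hw'').2.2 w hpref)

theorem exists_wPref_of_mem_finalRejections (h : (x, w) ∈ J.finalRejections)
    (hacc : J.wAcc w x) : ∃ y, (y, w) ∈ J.deferredAcceptance ∧ J.wPref w y x := by
  obtain ⟨s, hs, hrej⟩ := exists_rejectedAt h
  obtain ⟨y, hy, hpref⟩ := exists_proposes_wPref (p := (x, w)) hrej.2 hacc hs.le
  exact ⟨y, mem_deferredAcceptance.2 hy, hpref⟩

theorem isStable_deferredAcceptance (hJ : J.NoTies) : J.IsStable J.deferredAcceptance := by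
  refine ⟨isMatching_deferredAcceptance hJ, fun x w ⟨hmacc, hwacc, hmside, hwside⟩ => ?_⟩
  obtain ⟨y, hy, hpref⟩ :=
    exists_wPref_of_mem_finalRejections (mem_finalRejections hmacc hmside) hwacc
  rcases hwside with hs | ⟨y', hy', hpref'⟩
  · exact hs y hy
  · obtain rfl : y' = y :=
      congrArg Prod.fst ((isMatching_deferredAcceptance hJ).2.2 _ hy' _ hy rfl)
    exact wPref_irrefl (hpref.trans hpref')

theorem exists_mem_deferredAcceptance_of_isStable (hJ : J.MStrict) {ν : Finset (α × β)}
    (hν : J.IsStable ν) (hxw : (x, w) ∈ ν) :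
    ∃ w', (x, w') ∈ J.deferredAcceptance ∧ ¬ J.mPref x w w' := by
  have hR : (x, w) ∉ J.finalRejections :=
    disjoint_right.1 (disjoint_rejections_of_isStable hJ hν _) hxw
  obtain ⟨w', hw'⟩ := exists_proposes (hν.1.1 _ hxw).1 hR
  exact ⟨w', mem_deferredAcceptance.2 hw', fun hp => hR (hw'.2.2 w hp)⟩

end Outcome

section BlockingLemma

variable [Fintype α] [Fintype β] {J : SMInst α β} {μ : Finset (α × β)} {m x x' y : α} {w : β}
  {t : ℕ}

theorem Proposes.mSingle_or_not_mPref (hy : J.Proposes (J.rejections t) y w) :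
    mSingle J.deferredAcceptance y ∨ ∃ u, (y, u) ∈ J.deferredAcceptance ∧ ¬ J.mPref y u w := by
  by_cases hs : mSingle J.deferredAcceptance y
  · exact Or.inl hs
  obtain ⟨u, hu⟩ : ∃ u, (y, u) ∈ J.deferredAcceptance := by simpa [mSingle] using hs
  exact Or.inr ⟨u, hu, hy.not_mPref_of_subset (mem_deferredAcceptance.1 hu)
    (rejections_subset_finalRejections t)⟩

theorem Proposes.exists_rejectedAt_of_ne (hJ : J.NoTies) (hy : J.Proposes (J.rejections t) y w)
    (hxw : (x, w) ∈ J.deferredAcceptance) (hyx : y ≠ x) :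
    ∃ s, t ≤ s ∧ s < Fintype.card (α × β) ∧ J.RejectedAt s (y, w) := by
  have hyN : (y, w) ∈ J.finalRejections := by
    by_contra h
    have hyD := mem_deferredAcceptance.2 (hy.of_subset (rejections_subset_finalRejections t) h)
    exact hyx (congrArg Prod.fst ((isMatching_deferredAcceptance hJ).2.2 _ hyD _ hxw rfl))
  obtain ⟨s, hsN, hs⟩ := exists_rejectedAt hyN
  exact ⟨s, not_lt.1 fun hst => hy.2.1 (J.monotone_rejections hst hs.2), hsN, hs⟩

theorem exists_mPrefMatching_deferredAcceptance_partner (hJ : J.NoTies) (hμ : J.IsMatching μ)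
    (hnb : ∀ a b, J.Blocks μ a b → J.mPrefMatching a μ J.deferredAcceptance)
    (hx : J.mPrefMatching x μ J.deferredAcceptance) :
    ∃ x', J.mPrefMatching x' μ J.deferredAcceptance ∧
      ∃ b, (x, b) ∈ μ ∧ (x', b) ∈ J.deferredAcceptance := by
  have hD := isMatching_deferredAcceptance hJ
  obtain ⟨b, hb, hacc, hside⟩ := hx
  obtain ⟨x', hx'D, hpref⟩ :=
    exists_wPref_of_mem_finalRejections (mem_finalRejections hacc hside) (hμ.1 _ hb).2
  refine ⟨x', by_contra fun hx' => hx' (hnb x' b ⟨(hD.1 _ hx'D).1, hpref.wAcc_left, ?_,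
    Or.inr ⟨x, hb, hpref⟩⟩), b, hb, hx'D⟩
  refine mSingle_or_mPref_of_not_mPrefMatching hJ.1 hμ hD hx' (hD.1 _ hx'D).1 (fun h => ?_)
    (Or.inr ⟨b, hx'D, mPref_irrefl⟩)
  obtain rfl : x' = x := congrArg Prod.fst (hμ.2.2 _ h _ hb rfl)
  exact wPref_irrefl hpref

theorem exists_mPrefMatching_matching_partner (hJ : J.NoTies) (hμ : J.IsMatching μ)
    (hnb : ∀ a b, J.Blocks μ a b → J.mPrefMatching a μ J.deferredAcceptance)
    (hx' : J.mPrefMatching x' μ J.deferredAcceptance) :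
    ∃ x, J.mPrefMatching x μ J.deferredAcceptance ∧
      ∃ b, (x, b) ∈ μ ∧ (x', b) ∈ J.deferredAcceptance := by
  choose! f hf using fun x (hx : J.mPrefMatching x μ J.deferredAcceptance) =>
    exists_mPrefMatching_deferredAcceptance_partner hJ hμ hnb hx
  have hinj : Set.InjOn f {x | J.mPrefMatching x μ J.deferredAcceptance} := by
    intro x hx z hz hxz
    obtain ⟨b, hb, hbD⟩ := (hf x hx).2
    obtain ⟨c, hc, hcD⟩ := (hf z hz).2
    obtain rfl : b = c :=
      congrArg Prod.snd ((isMatching_deferredAcceptance hJ).2.1 _ hbD _ hcD hxz)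
    exact congrArg Prod.fst (hμ.2.2 _ hb _ hc rfl)
  obtain ⟨x, hx, rfl⟩ :=
    (((Set.toFinite _).injOn_iff_bijOn_of_mapsTo fun x hx => (hf x hx).1).1 hinj).surjOn hx'
  exact ⟨x, hx, (hf x hx).2⟩

/-- The Blocking Lemma of Gale and Sotomayor. Suppose every pair blocking `μ` has a man preferring
`μ`; then `μ` and deferred acceptance match these men to the same women. Let `T` be the last step
at which one of them is rejected, `m₀` that man, `w` his final partner and `x` her partner in `μ`.
Having rejected `x` earlier, `w` holds at step `T` a proposal from some `y` she prefers to `x`;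
she rejects `y` after `T`, so `y` does not prefer `μ`, and `(y, w)` blocks `μ`. -/
theorem exists_blocks_not_mPrefMatching (hJ : J.NoTies) (hμ : J.IsMatching μ)
    (hm : J.mPrefMatching m μ J.deferredAcceptance) :
    ∃ a b, J.Blocks μ a b ∧ ¬ J.mPrefMatching a μ J.deferredAcceptance := by
  by_contra! hnb
  set D := J.deferredAcceptance
  set N := Fintype.card (α × β)
  have rejected : ∀ {x b}, J.mPrefMatching x μ D → (x, b) ∈ μ → (x, b) ∈ J.finalRejections := by
    rintro x b ⟨b', hb', hacc, hside⟩ hb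
    obtain rfl : b' = b := congrArg Prod.snd (hμ.2.1 _ hb' _ hb rfl)
    exact mem_finalRejections hacc hside
  let P : ℕ → Prop := fun s => ∃ x b, J.mPrefMatching x μ D ∧ J.RejectedAt s (x, b)
  have le_T : ∀ {s}, P s → s < N → s ≤ Nat.findGreatest P N :=
    fun hs hsN => Nat.le_findGreatest hsN.le hs
  have ⟨b₁, hb₁, _⟩ := hm
  obtain ⟨s₁, hs₁N, hs₁⟩ := exists_rejectedAt (rejected hm hb₁)
  obtain ⟨m₀, b₀, hm₀, hrej₀⟩ : P (Nat.findGreatest P N) :=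
    Nat.findGreatest_spec hs₁N.le ⟨m, b₁, hm, hs₁⟩
  obtain ⟨x, hx, w, hxμ, hm₀D⟩ := exists_mPrefMatching_matching_partner hJ hμ hnb hm₀
  obtain ⟨t₁, ht₁N, hrej₁⟩ := exists_rejectedAt (rejected hx hxμ)
  obtain ⟨y, hy, hpref⟩ := exists_proposes_wPref (p := (x, w)) hrej₁.2 (hμ.1 _ hxμ).2
    (le_T ⟨x, w, hx, hrej₁⟩ ht₁N)
  have hym₀ : y ≠ m₀ := by
    rintro rfl
    obtain rfl := hy.unique hJ.1 hrej₀.isRejectable.1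
    exact (mem_deferredAcceptance.1 hm₀D).2.1 (rejections_subset_finalRejections _ hrej₀.2)
  obtain ⟨s, hTs, hsN, hrej⟩ := hy.exists_rejectedAt_of_ne hJ hm₀D hym₀
  have hy' : ¬ J.mPrefMatching y μ D := fun hy' => by
    obtain rfl : s = Nat.findGreatest P N := le_antisymm (le_T ⟨y, w, hy', hrej⟩ hsN) hTs
    exact hym₀ (congrArg Prod.fst (hrej.eq hrej₀))
  refine hy' (hnb y w ⟨hy.1, hpref.wAcc_left, ?_, Or.inr ⟨x, hxμ, hpref⟩⟩)
  refine mSingle_or_mPref_of_not_mPrefMatching hJ.1 hμ (isMatching_deferredAcceptance hJ) hy'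
    hy.1 (fun h => ?_) hy.mSingle_or_not_mPref
  obtain rfl : y = x := congrArg Prod.fst (hμ.2.2 _ h _ hxμ rfl)
  exact wPref_irrefl hpref

end BlockingLemma

section StrategyProofness

variable {J J' : SMInst α β} {M : Finset (α × β)} {m : α} {w b : β}

noncomputable def onlyAccepts (J : SMInst α β) (m : α) (w : β) : SMInst α β :=
  ⟨Function.update J.mpref m fun b => if b = w then some 0 else none, J.wpref⟩

theorem onlyAccepts_mAcc_iff : (J.onlyAccepts m w).mAcc m b ↔ b = w := by
  by_cases hb : b = w <;> simp [mAcc, onlyAccepts, hb]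

theorem mDiffOnly_onlyAccepts : J.mDiffOnly (J.onlyAccepts m w) m :=
  ⟨rfl, fun _ hm' => (Function.update_of_ne hm' _ _).symm⟩

theorem mDiffOnly.onlyAccepts_eq (h : J.mDiffOnly J' m) :
    J.onlyAccepts m w = J'.onlyAccepts m w := by
  simp only [onlyAccepts, h.1, SMInst.mk.injEq, and_true]
  funext a
  by_cases ha : a = m
  · simp [ha]
  · simp [Function.update_of_ne ha, h.2 a ha]

theorem NoTies.onlyAccepts (hJ : J.NoTies) : (J.onlyAccepts m w).NoTies := by
  refine ⟨fun a b b' hbb' hb => ?_, hJ.2⟩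
  by_cases ha : a = m
  · subst ha
    obtain rfl := onlyAccepts_mAcc_iff.1 hb
    have hb' : (J.onlyAccepts a b).mAcc a b' := by rw [mAcc, ← hbb']; exact hb
    exact (onlyAccepts_mAcc_iff.1 hb').symm
  · have hrow := (mDiffOnly_onlyAccepts (J := J) (w := w)).2 a ha
    exact hJ.1 a b b' (by rwa [hrow]) (by rwa [mAcc, hrow])

theorem IsStable.onlyAccepts (hM : J.IsStable M) (hmw : (m, w) ∈ M) :
    (J.onlyAccepts m w).IsStable M := by
  have hd : J.mDiffOnly (J.onlyAccepts m w) m := mDiffOnly_onlyAccepts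
  refine ⟨hd.isMatching hM.1 fun b hb =>
    onlyAccepts_mAcc_iff.2 (congrArg Prod.snd (hM.1.2.1 _ hb _ hmw rfl)), fun a b hab => ?_⟩
  by_cases ha : a = m
  · subst ha
    obtain rfl := onlyAccepts_mAcc_iff.1 hab.1
    rcases hab.2.2.1 with hs | ⟨w', hw', hp⟩
    · exact hs _ hmw
    · obtain rfl := congrArg Prod.snd (hM.1.2.1 _ hw' _ hmw rfl)
      exact mPref_irrefl hp
  · exact hM.2 a b ((hd.blocks_iff ha).2 hab)

variable [Fintype α] [Fintype β]

theorem not_mPrefMatching_deferredAcceptance (hJ : J.NoTies) (hJ' : J'.NoTies)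
    (hd : J.mDiffOnly J' m) :
    ¬ J.mPrefMatching m J'.deferredAcceptance J.deferredAcceptance := by
  rintro ⟨w, hw, hacc, hside⟩
  have hJw : (J.onlyAccepts m w).NoTies := hJ.onlyAccepts
  have hmw : (m, w) ∈ (J.onlyAccepts m w).deferredAcceptance := by
    have hst := hd.onlyAccepts_eq ▸ (isStable_deferredAcceptance hJ').onlyAccepts hw
    obtain ⟨w', hw', -⟩ := exists_mem_deferredAcceptance_of_isStable hJw.1 hst hw
    obtain rfl := onlyAccepts_mAcc_iff.1 ((isMatching_deferredAcceptance hJw).1 _ hw').1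
    exact hw'
  have hst := isStable_deferredAcceptance hJw
  have hμ : J.IsMatching (J.onlyAccepts m w).deferredAcceptance :=
    mDiffOnly_onlyAccepts.symm.isMatching hst.1 fun b hb => by
      obtain rfl : b = w := congrArg Prod.snd (hst.1.2.1 _ hb _ hmw rfl)
      exact hacc
  obtain ⟨a, b, hab, ha⟩ := exists_blocks_not_mPrefMatching hJ hμ ⟨w, hmw, hacc, hside⟩
  have ham : a ≠ m := by rintro rfl; exact ha ⟨w, hmw, hacc, hside⟩
  exact hst.2 a b ((mDiffOnly_onlyAccepts.blocks_iff ham).1 hab)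

end StrategyProofness

end SMInst

/-- MAX SMTI admits a man-strategy-proof 2-approximate-stable mechanism. -/
theorem man_sp_two_approx_stable_mechanism_SMTI :
    ∃ S : ∀ n : ℕ, SMInst (Fin n) (Fin n) → Finset (Fin n × Fin n),
      (∀ (n : ℕ) (I : SMInst (Fin n) (Fin n)),
          I.IsStable (S n I) ∧
          ∀ Mopt : Finset (Fin n × Fin n), I.IsStable Mopt →
            Mopt.card ≤ 2 * (S n I).card) ∧
      ¬ ∃ (n : ℕ) (I I' : SMInst (Fin n) (Fin n)) (m : Fin n),
          SMInst.mDiffOnly I I' m ∧ I.mPrefMatching m (S n I') (S n I) := by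
  refine ⟨fun _ I => I.tieBreak.deferredAcceptance, fun _ I => ?_, ?_⟩
  · have hst := I.refines_tieBreak.isStable
      (SMInst.isStable_deferredAcceptance I.noTies_tieBreak)
    exact ⟨hst, fun _ hMopt => hMopt.1.card_le_two_mul hst⟩
  · rintro ⟨_, I, I', _, hd, hm⟩
    exact SMInst.not_mPrefMatching_deferredAcceptance I.noTies_tieBreak I'.noTies_tieBreak
      hd.tieBreak (I.refines_tieBreak.mPrefMatching hm)
end

section
/- MAX SMTI admits a woman-strategy-proof 2-approximate-stable mechanism: there exists a mechanism S such that for every SMTI instance I, S(I) is a stable matching with 2·|S(I)| ≥ |M_opt| for every stable matching M_opt of I, and no woman can, by submitting a falsified preference list while all other lists are unchanged, obtain an outcome she prefers with respect to her true list. -/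
namespace DAdev
open Classical Finset
noncomputable section

variable {n : ℕ}

/-- preference helpers -/
theorem mPref_trans {J : SMInst (Fin n) (Fin n)} {m : Fin n} {a b c : Fin n} :
    J.mPref m a b → J.mPref m b c → J.mPref m a c := by
  rintro ⟨r, s, h1, h2, h3⟩ ⟨s', u, h4, h5, h6⟩
  rw [h2] at h4; cases h4
  exact ⟨r, u, h1, h5, lt_trans h3 h6⟩

theorem wPref_trans {J : SMInst (Fin n) (Fin n)} {w : Fin n} {a b c : Fin n} :
    J.wPref w a b → J.wPref w b c → J.wPref w a c := by
  rintro ⟨r, s, h1, h2, h3⟩ ⟨s', u, h4, h5, h6⟩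
  rw [h2] at h4; cases h4
  exact ⟨r, u, h1, h5, lt_trans h3 h6⟩

theorem mPref_irrefl {J : SMInst (Fin n) (Fin n)} {m a : Fin n} : ¬ J.mPref m a a := by
  rintro ⟨r, s, h1, h2, h3⟩; rw [h1] at h2; cases h2; exact lt_irrefl _ h3

theorem wPref_irrefl {J : SMInst (Fin n) (Fin n)} {w a : Fin n} : ¬ J.wPref w a a := by
  rintro ⟨r, s, h1, h2, h3⟩; rw [h1] at h2; cases h2; exact lt_irrefl _ h3

theorem mPref_total {J : SMInst (Fin n) (Fin n)} (hM : J.MStrict) {m a b : Fin n}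
    (ha : J.mAcc m a) (hb : J.mAcc m b) (hab : a ≠ b) :
    J.mPref m a b ∨ J.mPref m b a := by
  obtain ⟨r, hr⟩ := Option.isSome_iff_exists.1 ha
  obtain ⟨s, hs⟩ := Option.isSome_iff_exists.1 hb
  rcases lt_trichotomy r s with h | h | h
  · exact Or.inl ⟨r, s, hr, hs, h⟩
  · exact absurd (hM m a b (by rw [hr, hs, h]) ha) hab
  · exact Or.inr ⟨s, r, hs, hr, h⟩

theorem wPref_total {J : SMInst (Fin n) (Fin n)} (hW : J.WStrict) {w a b : Fin n}
    (ha : J.wAcc w a) (hb : J.wAcc w b) (hab : a ≠ b) :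
    J.wPref w a b ∨ J.wPref w b a := by
  obtain ⟨r, hr⟩ := Option.isSome_iff_exists.1 ha
  obtain ⟨s, hs⟩ := Option.isSome_iff_exists.1 hb
  rcases lt_trichotomy r s with h | h | h
  · exact Or.inl ⟨r, s, hr, hs, h⟩
  · exact absurd (hW w a b (by rw [hr, hs, h]) ha) hab
  · exact Or.inr ⟨s, r, hs, hr, h⟩

theorem mPref_asymm {J : SMInst (Fin n) (Fin n)} {m a b : Fin n} :
    J.mPref m a b → ¬ J.mPref m b a := by
  rintro ⟨r, s, h1, h2, h3⟩ ⟨s', r', h4, h5, h6⟩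
  rw [h1] at h5; rw [h2] at h4; cases h4; cases h5; omega

theorem wPref_asymm {J : SMInst (Fin n) (Fin n)} {w a b : Fin n} :
    J.wPref w a b → ¬ J.wPref w b a := by
  rintro ⟨r, s, h1, h2, h3⟩ ⟨s', r', h4, h5, h6⟩
  rw [h1] at h5; rw [h2] at h4; cases h4; cases h5; omega

structure DAState (n : ℕ) where
  rem : Fin n → Finset (Fin n)
  eng : Fin n → Option (Fin n)

variable (J : SMInst (Fin n) (Fin n))

def accSet (w : Fin n) : Finset (Fin n) := univ.filter (fun m => (J.wpref w m).isSome)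

theorem mem_accSet {w m : Fin n} : m ∈ accSet J w ↔ J.wAcc w m := by
  simp [accSet, SMInst.wAcc]

def freeW (σ : DAState n) (w : Fin n) : Prop := ∀ m, σ.eng m ≠ some w

def enabled (σ : DAState n) (w : Fin n) : Prop := freeW σ w ∧ (σ.rem w).Nonempty

def wr (w m : Fin n) : ℕ := (J.wpref w m).getD 0

def pickSpec (σ : DAState n) (p : Option (Fin n × Fin n)) : Prop :=
  (p = none ∧ ¬ ∃ w, enabled σ w) ∨
  (∃ w m, p = some (w, m) ∧ enabled σ w ∧ m ∈ σ.rem w ∧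
    ∀ m' ∈ σ.rem w, wr J w m ≤ wr J w m')

theorem pickSpec_exists (σ : DAState n) : ∃ p, pickSpec J σ p := by
  by_cases h : ∃ w, enabled σ w
  · obtain ⟨w, hw⟩ := h
    obtain ⟨m, hm, hmin⟩ := Finset.exists_min_image (σ.rem w) (wr J w) hw.2
    exact ⟨some (w, m), Or.inr ⟨w, m, rfl, hw, hm, hmin⟩⟩
  · exact ⟨none, Or.inl ⟨rfl, h⟩⟩

def pick (σ : DAState n) : Option (Fin n × Fin n) := (pickSpec_exists J σ).choose

theorem pick_spec (σ : DAState n) : pickSpec J σ (pick J σ) := (pickSpec_exists J σ).choose_spec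

theorem pick_some {σ : DAState n} {w m : Fin n} (h : pick J σ = some (w, m)) :
    enabled σ w ∧ m ∈ σ.rem w ∧ ∀ m' ∈ σ.rem w, wr J w m ≤ wr J w m' := by
  rcases pick_spec J σ with ⟨h1, _⟩ | ⟨w', m', h1, h2, h3, h4⟩
  · rw [h] at h1; cases h1
  · rw [h] at h1; obtain ⟨rfl, rfl⟩ : w' = w ∧ m' = m := by
      constructor <;> · injection h1 with h1; cases h1; rfl
    exact ⟨h2, h3, h4⟩

theorem pick_none {σ : DAState n} (h : pick J σ = none) : ¬ ∃ w, enabled σ w := by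
  rcases pick_spec J σ with ⟨_, h2⟩ | ⟨w', m', h1, _⟩
  · exact h2
  · rw [h] at h1; cases h1

theorem pick_of_enabled {σ : DAState n} (h : ∃ w, enabled σ w) :
    ∃ w m, pick J σ = some (w, m) := by
  rcases hp : pick J σ with _ | ⟨w, m⟩
  · exact absurd h (pick_none J hp)
  · exact ⟨w, m, rfl⟩

def accepts (σ : DAState n) (m w : Fin n) : Prop :=
  J.mAcc m w ∧ ∀ c, σ.eng m = some c → J.mPref m w c

def doProp (σ : DAState n) (p : Fin n × Fin n) : DAState n :=
  { rem := Function.update σ.rem p.1 (σ.rem p.1 \ {p.2}),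
    eng := if accepts J σ p.2 p.1 then Function.update σ.eng p.2 (some p.1) else σ.eng }

def step (σ : DAState n) : DAState n := (pick J σ).elim σ (doProp J σ)

theorem step_none {σ : DAState n} (h : pick J σ = none) : step J σ = σ := by
  simp [step, h]

theorem step_some {σ : DAState n} {w m : Fin n} (h : pick J σ = some (w, m)) :
    step J σ = doProp J σ (w, m) := by
  simp [step, h]

def init : DAState n := ⟨fun w => accSet J w, fun _ => none⟩

def run (t : ℕ) : DAState n := (step J)^[t] (init J)

theorem run_succ (t : ℕ) : run J (t + 1) = step J (run J t) :=
  Function.iterate_succ_apply' _ _ _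

def proposes (t : ℕ) (w m : Fin n) : Prop := pick J (run J t) = some (w, m)

end
end DAdev
namespace DAdev
open Classical Finset
noncomputable section

variable {n : ℕ} (J : SMInst (Fin n) (Fin n))

theorem rem_step_subset (σ : DAState n) (w : Fin n) : (step J σ).rem w ⊆ σ.rem w := by
  rcases hp : pick J σ with _ | ⟨w₀, m₀⟩
  · rw [step_none J hp]
  · rw [step_some J hp]
    by_cases h : w = w₀
    · subst h
      show Function.update σ.rem w (σ.rem w \ {m₀}) w ⊆ σ.rem w
      rw [Function.update_self]
      exact Finset.sdiff_subset
    · show Function.update σ.rem w₀ (σ.rem w₀ \ {m₀}) w ⊆ σ.rem w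
      rw [Function.update_of_ne h]

theorem rem_antitone {s t : ℕ} (h : s ≤ t) (w : Fin n) : (run J t).rem w ⊆ (run J s).rem w := by
  induction t with
  | zero => cases Nat.le_zero.1 h; exact Finset.Subset.refl _
  | succ t ih =>
    rcases Nat.lt_or_ge s (t+1) with h' | h'
    · refine Finset.Subset.trans ?_ (ih (Nat.lt_succ_iff.1 h'))
      rw [run_succ]; exact rem_step_subset J _ w
    · cases le_antisymm h h'; exact Finset.Subset.refl _

theorem rem_run_subset_acc (t : ℕ) (w : Fin n) : (run J t).rem w ⊆ accSet J w := by
  have := rem_antitone J (Nat.zero_le t) w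
  simpa [run, init] using this

theorem eng_step_of_eng {σ : DAState n} {m c : Fin n} (h : σ.eng m = some c) :
    ∃ c', (step J σ).eng m = some c' ∧ (c' = c ∨ J.mPref m c' c) := by
  rcases hp : pick J σ with _ | ⟨w₀, m₀⟩
  · rw [step_none J hp]; exact ⟨c, h, Or.inl rfl⟩
  · rw [step_some J hp]
    by_cases ha : accepts J σ m₀ w₀
    · by_cases hm : m = m₀
      · subst hm
        refine ⟨w₀, ?_, Or.inr (ha.2 c h)⟩
        simp [doProp, ha, Function.update_self]
      · exact ⟨c, by simp [doProp, ha, Function.update_of_ne hm, h], Or.inl rfl⟩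
    · exact ⟨c, by simp [doProp, ha, h], Or.inl rfl⟩

theorem eng_step_new {σ : DAState n} {m : Fin n} (h : (step J σ).eng m ≠ σ.eng m) :
    ∃ w, pick J σ = some (w, m) ∧ accepts J σ m w ∧ (step J σ).eng m = some w := by
  rcases hp : pick J σ with _ | ⟨w₀, m₀⟩
  · rw [step_none J hp] at h; exact absurd rfl h
  · rw [step_some J hp] at h ⊢
    by_cases ha : accepts J σ m₀ w₀
    · by_cases hm : m = m₀
      · subst hm
        exact ⟨w₀, rfl, ha, by simp [doProp, ha, Function.update_self]⟩
      · exact absurd (by simp [doProp, ha, Function.update_of_ne hm]) h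
    · exact absurd (by simp [doProp, ha]) h

theorem rem_step_change {σ : DAState n} {w m : Fin n} (h1 : m ∈ σ.rem w)
    (h2 : m ∉ (step J σ).rem w) : pick J σ = some (w, m) := by
  rcases hp : pick J σ with _ | ⟨w₀, m₀⟩
  · rw [step_none J hp] at h2; exact absurd h1 h2
  · rw [step_some J hp] at h2
    by_cases hw : w = w₀
    · subst hw
      have he : (doProp J σ (w, m₀)).rem w = σ.rem w \ {m₀} := by
        simp [doProp]
      rw [he, Finset.mem_sdiff] at h2
      push_neg at h2
      have := h2 h1
      rw [Finset.mem_singleton] at this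
      subst this; rfl
    · have he : (doProp J σ (w₀, m₀)).rem w = σ.rem w := by
        simp [doProp, Function.update_of_ne hw]
      rw [he] at h2; exact absurd h1 h2

theorem rem_proposes {t : ℕ} {w m : Fin n} (h : proposes J t w m) :
    (run J (t+1)).rem w = (run J t).rem w \ {m} := by
  rw [run_succ, step_some J h]
  simp [doProp, Function.update_self]

theorem mem_rem_of_proposes {t : ℕ} {w m : Fin n} (h : proposes J t w m) :
    m ∈ (run J t).rem w := (pick_some J h).2.1

theorem notMem_rem_succ {t : ℕ} {w m : Fin n} (h : proposes J t w m) :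
    m ∉ (run J (t+1)).rem w := by
  rw [rem_proposes J h]; simp

/-- proposal times are unique -/
theorem proposes_unique {s t : ℕ} {w m : Fin n} (hs : proposes J s w m)
    (ht : proposes J t w m) : s = t := by
  rcases lt_trichotomy s t with h | h | h
  · exact absurd (rem_antitone J h w (mem_rem_of_proposes J ht)) (notMem_rem_succ J hs)
  · exact h
  · exact absurd (rem_antitone J h w (mem_rem_of_proposes J hs)) (notMem_rem_succ J ht)

theorem proposes_det {t : ℕ} {w m w' m' : Fin n} (h : proposes J t w m)
    (h' : proposes J t w' m') : w = w' ∧ m = m' := by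
  unfold proposes at h h'
  rw [h] at h'
  injection h' with h'
  exact ⟨congrArg Prod.fst h', congrArg Prod.snd h'⟩

end
end DAdev
namespace DAdev
open Classical Finset
noncomputable section

variable {n : ℕ} (J : SMInst (Fin n) (Fin n))

/-- R3: engagement facts -/
theorem eng_facts : ∀ t, ∀ m w : Fin n, (run J t).eng m = some w →
    J.mAcc m w ∧ J.wAcc w m ∧ m ∉ (run J t).rem w := by
  intro t
  induction t with
  | zero => intro m w h; simp [run, init] at h
  | succ t ih =>
    intro m w h
    by_cases hc : (run J (t+1)).eng m = (run J t).eng m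
    · rw [hc] at h
      obtain ⟨h1, h2, h3⟩ := ih m w h
      exact ⟨h1, h2, fun hm => h3 (rem_antitone J (Nat.le_succ t) w hm)⟩
    · rw [run_succ] at hc ⊢
      obtain ⟨w', hpk, hac, heng⟩ := eng_step_new J hc
      rw [← run_succ] at heng hc ⊢
      rw [heng] at h
      injection h with h; subst h
      have hm := mem_rem_of_proposes J hpk
      refine ⟨hac.1, ?_, ?_⟩
      · exact (mem_accSet J).1 (rem_run_subset_acc J t _ hm)
      · exact notMem_rem_succ J hpk
  
/-- R4: at most one fiancé per woman -/
theorem eng_inj : ∀ t, ∀ m m' w : Fin n, (run J t).eng m = some w →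
    (run J t).eng m' = some w → m = m' := by
  intro t
  induction t with
  | zero => intro m m' w h; simp [run, init] at h
  | succ t ih =>
    intro m m' w h h'
    rcases hp : pick J (run J t) with _ | ⟨w₀, m₀⟩
    · rw [run_succ, step_none J hp] at h h'
      exact ih m m' w h h'
    · have hfree : freeW (run J t) w₀ := (pick_some J hp).1.1
      rw [run_succ, step_some J hp] at h h'
      by_cases ha : accepts J (run J t) m₀ w₀
      · simp only [doProp, ha, if_pos] at h h'
        by_cases hm : m = m₀ <;> by_cases hm' : m' = m₀
        · rw [hm, hm']
        · subst hm
          rw [Function.update_self] at h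
          injection h with h; subst h
          rw [Function.update_of_ne hm'] at h'
          exact absurd h' (hfree m')
        · subst hm'
          rw [Function.update_self] at h'
          injection h' with h'; subst h'
          rw [Function.update_of_ne hm] at h
          exact absurd h (hfree m)
        · rw [Function.update_of_ne hm] at h
          rw [Function.update_of_ne hm'] at h'
          exact ih m m' w h h'
      · simp only [doProp, ha, if_neg, not_false_iff] at h h'
        exact ih m m' w h h'

/-- R5: rejection invariant -/
theorem rejected_better (hM : J.MStrict) : ∀ t, ∀ w m : Fin n, m ∈ accSet J w →
    m ∉ (run J t).rem w → (run J t).eng m ≠ some w → J.mAcc m w →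
    ∃ c, (run J t).eng m = some c ∧ J.mPref m c w := by
  intro t
  induction t with
  | zero => intro w m hacc hrem; exact absurd (by simp [run, init]; exact hacc) hrem
  | succ t ih =>
    intro w m hacc hrem hne hmA
    rcases hp : pick J (run J t) with _ | ⟨w₀, m₀⟩
    · rw [run_succ, step_none J hp] at hrem hne ⊢
      exact ih w m hacc hrem hne hmA
    · have hpk := pick_some J hp
      have hfree : freeW (run J t) w₀ := hpk.1.1
      rw [run_succ, step_some J hp] at hrem hne ⊢
      -- rem analysis: was m removed before, or is (w,m) = (w₀,m₀)?
      have hremold : m ∉ (run J t).rem w ∨ (w = w₀ ∧ m = m₀) := by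
        by_cases hw : w = w₀
        · subst hw
          have : (doProp J (run J t) (w, m₀)).rem w = (run J t).rem w \ {m₀} := by
            simp [doProp]
          rw [this, Finset.mem_sdiff] at hrem
          push_neg at hrem
          by_cases hmm : m = m₀
          · exact Or.inr ⟨rfl, hmm⟩
          · exact Or.inl (fun hin => hmm (Finset.mem_singleton.1 (hrem hin)))
        · have : (doProp J (run J t) (w₀, m₀)).rem w = (run J t).rem w := by
            simp [doProp, Function.update_of_ne hw]
          rw [this] at hrem
          exact Or.inl hrem
      by_cases ha : accepts J (run J t) m₀ w₀
      · have hengeq : ∀ m', m' ≠ m₀ →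
            (doProp J (run J t) (w₀, m₀)).eng m' = (run J t).eng m' := by
          intro m' hm'
          simp [doProp, ha, Function.update_of_ne hm']
        have hengm₀ : (doProp J (run J t) (w₀, m₀)).eng m₀ = some w₀ := by
          simp [doProp, ha]
        rcases hremold with hremold | ⟨rfl, rfl⟩
        · by_cases hmm : m = m₀
          · subst hmm
            rw [hengm₀] at hne ⊢
            -- previously rejected w (m ∉ old rem w), old eng:
            have hwne : w ≠ w₀ := fun hww => hne (by rw [hww])
            by_cases holde : (run J t).eng m = some w
            · -- m was engaged to w, now accepts w₀: w₀ better than w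
              exact ⟨w₀, rfl, ha.2 w holde⟩
            · obtain ⟨c, hc, hcw⟩ := ih w m hacc hremold holde hmA
              exact ⟨w₀, rfl, mPref_trans (ha.2 c hc) hcw⟩
          · rw [hengeq m hmm] at hne ⊢
            exact ih w m hacc hremold hne hmA
        · -- the new proposal (w₀, m₀), accepted: eng = some w₀ contradicts hne
          rw [hengm₀] at hne
          exact absurd rfl hne
      · have hengeq : (doProp J (run J t) (w₀, m₀)).eng = (run J t).eng := by
          simp [doProp, ha]
        rw [hengeq] at hne ⊢
        rcases hremold with hremold | ⟨rfl, rfl⟩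
        · exact ih w m hacc hremold hne hmA
        · -- rejected now: ¬accepts with mAcc gives current better fiancée
          rw [accepts] at ha
          push_neg at ha
          obtain ⟨c, hc, hncw⟩ := ha hmA
          have hcacc : J.mAcc m c := (eng_facts J t m c hc).1
          have hcw : c ≠ w := by
            intro hcw; subst hcw
            exact hfree m hc
          rcases mPref_total hM hcacc hmA hcw with hh | hh
          · exact ⟨c, hc, hh⟩
          · exact absurd hh hncw

/-- R6: engagement originates in an accepted proposal -/
theorem eng_origin : ∀ t, ∀ m w : Fin n, (run J t).eng m = some w →
    ∃ s < t, proposes J s w m := by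
  intro t
  induction t with
  | zero => intro m w h; simp [run, init] at h
  | succ t ih =>
    intro m w h
    by_cases hc : (run J (t+1)).eng m = (run J t).eng m
    · rw [hc] at h
      obtain ⟨s, hs, hss⟩ := ih m w h
      exact ⟨s, Nat.lt_succ_of_lt hs, hss⟩
    · rw [run_succ] at hc
      obtain ⟨w', hpk, hac, heng⟩ := eng_step_new J hc
      rw [← run_succ] at heng
      rw [heng] at h
      injection h with h; subst h
      exact ⟨t, Nat.lt_succ_self t, hpk⟩

/-- R9: removal from rem originates in a proposal -/
theorem removed_proposed : ∀ t, ∀ w m : Fin n, m ∈ accSet J w →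
    m ∉ (run J t).rem w → ∃ s < t, proposes J s w m := by
  intro t
  induction t with
  | zero => intro w m hacc hrem; exact absurd (by simp [run, init]; exact hacc) hrem
  | succ t ih =>
    intro w m hacc hrem
    by_cases hold : m ∈ (run J t).rem w
    · have := rem_step_change J hold (by rw [← run_succ]; exact hrem)
      exact ⟨t, Nat.lt_succ_self t, this⟩
    · obtain ⟨s, hs, hss⟩ := ih w m hacc hold
      exact ⟨s, Nat.lt_succ_of_lt hs, hss⟩

/-- NR: once engaged, stays engaged to someone weakly better -/
theorem eng_improves : ∀ d s, ∀ m c : Fin n, (run J s).eng m = some c →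
    ∃ c', (run J (s + d)).eng m = some c' ∧ (c' = c ∨ J.mPref m c' c) := by
  intro d
  induction d with
  | zero => intro s m c h; exact ⟨c, h, Or.inl rfl⟩
  | succ d ih =>
    intro s m c h
    obtain ⟨c', hc', hcc⟩ := ih s m c h
    obtain ⟨c'', hc'', hcc'⟩ := by
      have := eng_step_of_eng J (σ := run J (s + d)) hc'
      rw [← run_succ] at this
      exact this
    refine ⟨c'', by rw [show s + (d+1) = (s + d) + 1 from rfl]; exact hc'', ?_⟩
    rcases hcc with rfl | hcc
    · exact hcc'
    · rcases hcc' with rfl | hcc'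
      · exact Or.inr hcc
      · exact Or.inr (mPref_trans hcc' hcc)

theorem eng_improves' {s t : ℕ} (h : s ≤ t) {m c : Fin n} (hc : (run J s).eng m = some c) :
    ∃ c', (run J t).eng m = some c' ∧ (c' = c ∨ J.mPref m c' c) := by
  obtain ⟨d, rfl⟩ := Nat.exists_eq_add_of_le h
  exact eng_improves J d s m c hc

/-- LOCK: engaged at s and at T (to same w) implies engaged throughout [s, T] -/
theorem eng_lock {s T : ℕ} {m w : Fin n} (hs : (run J s).eng m = some w)
    (hT : (run J T).eng m = some w) : ∀ u, s ≤ u → u ≤ T → (run J u).eng m = some w := by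
  have key : ∀ u, s ≤ u → ((run J u).eng m = some w ∨ ∀ v, u ≤ v → (run J v).eng m ≠ some w) := by
    intro u hu
    induction u with
    | zero => cases Nat.le_zero.1 hu; exact Or.inl hs
    | succ u ih =>
      rcases Nat.lt_or_ge s (u+1) with h' | h'
      · rcases ih (Nat.lt_succ_iff.1 h') with he | hne
        · obtain ⟨c', hc', hcc⟩ := by
            have := eng_step_of_eng J (σ := run J u) he
            rw [← run_succ] at this
            exact this
          rcases hcc with rfl | hcc
          · exact Or.inl hc'
          · refine Or.inr (fun v hv hve => ?_)
            obtain ⟨c'', hc'', hcc'⟩ := eng_improves' J hv hc'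
            rw [hve] at hc''
            injection hc'' with hc''
            subst hc''
            rcases hcc' with rfl | hcc'
            · exact mPref_irrefl hcc
            · exact mPref_irrefl (mPref_trans hcc' hcc)
        · exact Or.inr (fun v hv => hne v (Nat.le_of_succ_le hv))
      · cases le_antisymm hu h'; exact Or.inl hs
  intro u h1 h2
  rcases key u h1 with h | h
  · exact h
  · exact absurd hT (h T h2)

/-- a proposal whose proposer ends up engaged at a later time was accepted,
    and she is continuously engaged from t+1 up to T. -/
theorem lock_from_proposal {t T : ℕ} {m w : Fin n} (hp : proposes J t w m)
    (hT : (run J T).eng m = some w) (htT : t < T) :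
    ∀ u, t < u → u ≤ T → (run J u).eng m = some w := by
  -- first : engaged at t+1
  have h1 : (run J (t+1)).eng m = some w := by
    by_cases ha : accepts J (run J t) m w
    · rw [run_succ, step_some J hp]
      simp [doProp, ha]
    · -- rejected: can never become engaged to w afterwards, contradiction with hT
      exfalso
      have never : ∀ d, (run J (t + 1 + d)).eng m ≠ some w := by
        intro d
        induction d with
        | zero =>
          rw [run_succ, step_some J hp]
          simp only [doProp]
          by_cases ha' : accepts J (run J t) m w
          · exact absurd ha' ha
          · have hfw : freeW (run J t) w := (pick_some J hp).1.1
            by_cases haw : accepts J (run J t) m w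
            · exact absurd haw ha
            · simp only [haw, if_neg, not_false_iff]
              exact hfw m
        | succ d ih =>
          intro hcon
          rw [show t + 1 + (d+1) = (t + 1 + d) + 1 from rfl] at hcon
          by_cases hc : (run J ((t+1+d)+1)).eng m = (run J (t+1+d)).eng m
          · rw [hcon] at hc; exact ih hc.symm
          · rw [run_succ] at hc
            obtain ⟨w', hpk, hac, heng⟩ := eng_step_new J hc
            rw [← run_succ] at heng
            rw [hcon] at heng
            injection heng with heng
            subst heng
            have := proposes_unique J hp hpk
            omega
      obtain ⟨d, rfl⟩ : ∃ d, T = t + 1 + d := ⟨T - (t+1), by omega⟩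
      exact never d hT
  intro u hu1 hu2
  exact eng_lock J h1 hT u hu1 hu2

end
end DAdev
namespace DAdev
open Classical Finset
noncomputable section

variable {n : ℕ} (J : SMInst (Fin n) (Fin n))

/-- R8: proposals of a woman go in strictly decreasing preference -/
theorem proposes_order (hW : J.WStrict) {s t : ℕ} {w m m' : Fin n}
    (hs : proposes J s w m) (ht : proposes J t w m') (hst : s < t) :
    J.wPref w m m' := by
  have hm' : m' ∈ (run J s).rem w :=
    rem_antitone J (le_of_lt hst) w (mem_rem_of_proposes J ht)
  have hmin := (pick_some J hs).2.2 m' hm'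
  have hne : m ≠ m' := by
    intro h; subst h
    exact absurd (rem_antitone J hst w (mem_rem_of_proposes J ht)) (notMem_rem_succ J hs)
  have hma : J.wAcc w m := (mem_accSet J).1 (rem_run_subset_acc J s w (mem_rem_of_proposes J hs))
  have hmb : J.wAcc w m' := (mem_accSet J).1 (rem_run_subset_acc J s w hm')
  obtain ⟨a, ha⟩ := Option.isSome_iff_exists.1 hma
  obtain ⟨b, hb⟩ := Option.isSome_iff_exists.1 hmb
  have hab : a ≤ b := by
    have := hmin
    rw [wr, wr, ha, hb] at this
    exact this
  have : a ≠ b := by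
    intro h; subst h
    exact hne (hW w m m' (by rw [ha, hb]) hma)
  exact ⟨a, b, ha, hb, lt_of_le_of_ne hab this⟩

/-- R11: an acceptable proposal leaves the man engaged -/
theorem eng_after_acceptable_proposal {t : ℕ} {w m : Fin n} (hp : proposes J t w m)
    (hmA : J.mAcc m w) : ∃ c, (run J (t+1)).eng m = some c := by
  rw [run_succ, step_some J hp]
  by_cases ha : accepts J (run J t) m w
  · exact ⟨w, by simp [doProp, ha]⟩
  · have hna := ha
    rw [accepts] at ha
    push_neg at ha
    obtain ⟨c, hc, _⟩ := ha hmA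
    refine ⟨c, ?_⟩
    have he : (doProp J (run J t) (w, m)).eng = (run J t).eng := by
      simp [doProp, hna]
    rw [he]; exact hc

/-- total number of potential proposals -/
def Ntot : ℕ := ∑ w : Fin n, (accSet J w).card

def meas (σ : DAState n) : ℕ := ∑ w : Fin n, (σ.rem w).card

theorem meas_decr {σ : DAState n} {w m : Fin n} (h : pick J σ = some (w, m)) :
    meas (step J σ) + 1 ≤ meas σ := by
  rw [step_some J h]
  have hm : m ∈ σ.rem w := (pick_some J h).2.1
  have hcard : ((σ.rem w) \ {m}).card + 1 = (σ.rem w).card := by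
    rw [Finset.card_sdiff_of_subset (Finset.singleton_subset_iff.2 hm)]
    have : 1 ≤ (σ.rem w).card := Finset.card_pos.2 ⟨m, hm⟩
    simp; omega
  unfold meas
  have hsplit : ∀ f : Fin n → Finset (Fin n),
      ∑ x : Fin n, (f x).card = (f w).card + ∑ x ∈ univ.erase w, (f x).card := by
    intro f
    rw [← Finset.sum_erase_add univ _ (Finset.mem_univ w)]
    omega
  rw [hsplit, hsplit (fun x => σ.rem x)]
  have heq : ∀ x ∈ univ.erase w, ((doProp J σ (w, m)).rem x).card = (σ.rem x).card := by
    intro x hx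
    have hxw : x ≠ w := (Finset.mem_erase.1 hx).1
    simp [doProp, Function.update_of_ne hxw]
  rw [Finset.sum_congr rfl heq]
  have : (doProp J σ (w, m)).rem w = σ.rem w \ {m} := by simp [doProp]
  rw [this]
  omega

theorem run_stops {t : ℕ} (h : ¬ ∃ w, enabled (run J t) w) :
    ∀ s, t ≤ s → run J s = run J t := by
  intro s hs
  obtain ⟨d, rfl⟩ := Nat.exists_eq_add_of_le hs
  induction d with
  | zero => rfl
  | succ d ih =>
    rw [show t + (d+1) = (t+d) + 1 from rfl, run_succ, ih (Nat.le_add_right _ _)]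
    apply step_none
    rcases hp : pick J (run J t) with _ | ⟨w₀, m₀⟩
    · rfl
    · exact absurd ⟨w₀, (pick_some J hp).1⟩ h

theorem terminated : ¬ ∃ w, enabled (run J (Ntot J)) w := by
  have key : ∀ t, (¬ ∃ w, enabled (run J t) w) ∨ meas (run J t) + t ≤ Ntot J := by
    intro t
    induction t with
    | zero =>
      right
      simp [meas, run, init, Ntot]
    | succ t ih =>
      rcases ih with h | h
      · left
        rw [run_succ, step_none J (by
          rcases hp : pick J (run J t) with _ | ⟨w₀, m₀⟩
          · rfl
          · exact absurd ⟨w₀, (pick_some J hp).1⟩ h)]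
        exact h
      · rcases hp : pick J (run J t) with _ | ⟨w₀, m₀⟩
        · left
          rw [run_succ, step_none J hp]
          exact pick_none J hp
        · right
          have := meas_decr J hp
          rw [← run_succ] at this
          omega
  rcases key (Ntot J) with h | h
  · exact h
  · intro ⟨w, hw⟩
    have hm : meas (run J (Ntot J)) = 0 := by omega
    have : ((run J (Ntot J)).rem w).card = 0 := by
      by_contra hc
      have h1 : 0 < ((run J (Ntot J)).rem w).card := Nat.pos_of_ne_zero hc
      have h2 : ((run J (Ntot J)).rem w).card ≤ meas (run J (Ntot J)) :=
        Finset.single_le_sum (f := fun x => ((run J (Ntot J)).rem x).card)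
          (fun _ _ => Nat.zero_le _) (Finset.mem_univ w)
      omega
    exact absurd (Finset.card_pos.2 hw.2) (by omega)

theorem proposes_lt {t : ℕ} {w m : Fin n} (h : proposes J t w m) : t < Ntot J := by
  by_contra hc
  push_neg at hc
  have := run_stops J (terminated J) t hc
  unfold proposes at h
  rw [this] at h
  exact absurd ⟨w, (pick_some J h).1⟩ (terminated J)

/-- The DA output matching -/
def DAout : Finset (Fin n × Fin n) :=
  univ.filter (fun p => (run J (Ntot J)).eng p.1 = some p.2)

theorem mem_DAout {p : Fin n × Fin n} : p ∈ DAout J ↔ (run J (Ntot J)).eng p.1 = some p.2 := by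
  simp [DAout]

theorem DAout_isMatching : J.IsMatching (DAout J) := by
  refine ⟨?_, ?_, ?_⟩
  · intro p hp
    rw [mem_DAout] at hp
    obtain ⟨h1, h2, _⟩ := eng_facts J (Ntot J) p.1 p.2 hp
    exact ⟨h1, h2⟩
  · intro p hp q hq hpq
    rw [mem_DAout] at hp hq
    rw [hpq] at hp
    rw [hp] at hq
    injection hq with hq
    exact Prod.ext hpq hq
  · intro p hp q hq hpq
    rw [mem_DAout] at hp hq
    rw [hpq] at hp
    exact Prod.ext (eng_inj J (Ntot J) p.1 q.1 q.2 hp hq) hpq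

/-- Key: a woman acceptable-to-and-from m, who has "passed" m, cannot block with him -/
theorem no_block (hM : J.MStrict) (hW : J.WStrict) : ∀ m w, ¬ J.Blocks (DAout J) m w := by
  intro m w hb
  obtain ⟨hmA, hwA, hms, hws⟩ := hb
  set T := Ntot J with hT
  -- step 1 : m ∉ rem_T w, and (run T).eng m ≠ some w
  have hnotrem : m ∉ (run J T).rem w := by
    rcases hws with hsingle | ⟨m', hm', hpref⟩
    · -- w single: not enabled at T, free, so rem w empty
      have hfree : freeW (run J T) w := by
        intro m' hm'
        exact hsingle m' ((mem_DAout J).2 hm')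
      intro hmem
      exact absurd ⟨w, hfree, ⟨m, hmem⟩⟩ (terminated J)
    · -- w matched to m', prefers m; she proposed to m' at s, and m ∉ rem_s w
      rw [mem_DAout] at hm'
      obtain ⟨s, hsT, hsp⟩ := eng_origin J T m' w hm'
      intro hmem
      have hmem' : m ∈ (run J s).rem w := rem_antitone J (le_of_lt hsT) w hmem
      have hmin := (pick_some J hsp).2.2 m hmem'
      obtain ⟨a, b, ha, hb', hab⟩ := hpref
      rw [wr, wr, hb', ha] at hmin
      simp only [Option.getD_some] at hmin
      omega
  have hne : (run J T).eng m ≠ some w := by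
    intro hcon
    rcases hws with hsingle | ⟨m', hm', hpref⟩
    · exact hsingle m ((mem_DAout J).2 hcon)
    · rw [mem_DAout] at hm'
      have := eng_inj J T m m' w hcon hm'
      subst this
      exact wPref_irrefl hpref
  obtain ⟨c, hc, hcw⟩ := rejected_better J hM T w m ((mem_accSet J).2 hwA) hnotrem hne hmA
  rcases hms with hsingle | ⟨w', hw', hpref⟩
  · exact hsingle c ((mem_DAout J).2 hc)
  · rw [mem_DAout] at hw'
    rw [hc] at hw'
    injection hw' with hw'
    subst hw'
    exact mPref_asymm hpref hcw

theorem DAout_stable (hM : J.MStrict) (hW : J.WStrict) : J.IsStable (DAout J) :=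
  ⟨DAout_isMatching J, no_block J hM hW⟩

end
end DAdev
namespace DAdev
open Classical Finset
noncomputable section

variable {n : ℕ} (J : SMInst (Fin n) (Fin n))

theorem blocking_lemma (hM : J.MStrict) (hW : J.WStrict) (w₀ : Fin n)
    (M' : Finset (Fin n × Fin n))
    (h1 : ∀ p ∈ M', J.mAcc p.1 p.2)
    (h2 : ∀ p ∈ M', ∀ q ∈ M', p.1 = q.1 → p = q)
    (h3 : ∀ p ∈ M', ∀ q ∈ M', p.2 = q.2 → p = q)
    (h4 : ∀ p ∈ M', p.2 ≠ w₀ → J.wAcc p.2 p.1)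
    (h5 : J.wPrefMatching w₀ M' (DAout J)) :
    ∃ m w', w' ≠ w₀ ∧ J.mAcc m w' ∧ J.wAcc w' m ∧
      (∃ w, (m, w) ∈ M' ∧ J.mPref m w' w) ∧
      ((∀ m', (m', w') ∉ M') ∨ ∃ m₁, (m₁, w') ∈ M' ∧ J.wPref w' m m₁) := by
  classical
  set M₀ := DAout J with hM₀
  set Bp : Fin n → Prop := fun w => J.wPrefMatching w M' M₀ with hBp
  have hB0 : Bp w₀ := h5
  have hM₀match := DAout_isMatching J
  -- basic fact about B-women: their (unique) M'-partner is acceptable and strictly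
  -- preferred to any M₀-partner
  have Bp_strict : ∀ w m₁ m₂, Bp w → (m₁, w) ∈ M' → (m₂, w) ∈ M₀ → J.wPref w m₁ m₂ := by
    intro w m₁ m₂ hBw hm₁ hm₂
    obtain ⟨m, hmM', hwA, hside⟩ := hBw
    have : (m, w) = (m₁, w) := h3 _ hmM' _ hm₁ rfl
    injection this with hmm _
    subst hmm
    rcases hside with hsg | ⟨m', hm', hpref⟩
    · exact absurd hm₂ (hsg m₂)
    · have : (m', w) = (m₂, w) := hM₀match.2.2 _ hm' _ hm₂ rfl
      injection this with hmm _
      subst hmm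
      exact hpref
  have Bp_wAcc : ∀ w m₁, Bp w → (m₁, w) ∈ M' → J.wAcc w m₁ := by
    intro w m₁ hBw hm₁
    obtain ⟨m, hmM', hwA, _⟩ := hBw
    have : (m, w) = (m₁, w) := h3 _ hmM' _ hm₁ rfl
    injection this with hmm _
    subst hmm
    exact hwA
  set Mset : Fin n → Prop := fun m => ∃ w, Bp w ∧ (m, w) ∈ M' with hMset
  by_cases hcase : ∀ m, Mset m → ∃ w, Bp w ∧ (m, w) ∈ M₀
  · -- Case 2 : every M'-partner of a B-woman is M₀-matched to a B-woman
    -- bijection argument: every B-woman is M₀-matched to an Mset-man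
    set Bset : Finset (Fin n) := univ.filter (fun w => Bp w) with hBset
    have hmemB : ∀ w, w ∈ Bset ↔ Bp w := by intro w; simp [hBset]
    have hg : ∀ w ∈ Bset, ∃ u, u ∈ Bset ∧ ∃ m, (m, w) ∈ M' ∧ (m, u) ∈ M₀ := by
      intro w hw
      obtain ⟨m, hmM', _, _⟩ := (hmemB w).1 hw
      obtain ⟨u, hBu, huM₀⟩ := hcase m ⟨w, (hmemB w).1 hw, hmM'⟩
      exact ⟨u, (hmemB u).2 hBu, m, hmM', huM₀⟩
    choose g hgB hgm using hg
    have hinj : ∀ a₁ a₂ (ha₁ : a₁ ∈ Bset) (ha₂ : a₂ ∈ Bset), g a₁ ha₁ = g a₂ ha₂ → a₁ = a₂ := by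
      intro a₁ a₂ ha₁ ha₂ heq
      obtain ⟨m₁, hm₁M', hm₁M₀⟩ := hgm a₁ ha₁
      obtain ⟨m₂, hm₂M', hm₂M₀⟩ := hgm a₂ ha₂
      rw [heq] at hm₁M₀
      have he1 : (m₁, g a₂ ha₂) = (m₂, g a₂ ha₂) := hM₀match.2.2 _ hm₁M₀ _ hm₂M₀ rfl
      injection he1 with hmm _
      subst hmm
      have he2 := h2 _ hm₁M' _ hm₂M' rfl
      injection he2
    have hsurj := Finset.surj_on_of_inj_on_of_card_le (s := Bset) (t := Bset) g
      (fun a ha => hgB a ha) hinj (le_refl _)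
    have key2 : ∀ w, Bp w → ∃ m, Mset m ∧ (m, w) ∈ M₀ := by
      intro w hBw
      obtain ⟨u, hu, rfl⟩ := hsurj w ((hmemB w).2 hBw)
      obtain ⟨m, hmM', hmM₀⟩ := hgm u hu
      exact ⟨m, ⟨u, (hmemB u).1 hu, hmM'⟩, hmM₀⟩
    -- every B-woman proposed to her M'-partner
    have propM' : ∀ w m₁ m₂, Bp w → (m₁, w) ∈ M' → (m₂, w) ∈ M₀ →
        ∃ t, t < Ntot J ∧ proposes J t w m₁ := by
      intro w m₁ m₂ hBw hm₁ hm₂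
      have hpref := Bp_strict w m₁ m₂ hBw hm₁ hm₂
      have hengm₂ : (run J (Ntot J)).eng m₂ = some w := (mem_DAout J).1 hm₂
      obtain ⟨s, hsN, hsp⟩ := eng_origin J (Ntot J) m₂ w hengm₂
      have hm₁acc : m₁ ∈ accSet J w := (mem_accSet J).2 (Bp_wAcc w m₁ hBw hm₁)
      have hnotrem : m₁ ∉ (run J s).rem w := by
        intro hmem
        have hmin := (pick_some J hsp).2.2 m₁ hmem
        obtain ⟨a, b, ha, hb, hab⟩ := hpref
        rw [wr, wr, ha, hb] at hmin
        simp only [Option.getD_some] at hmin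
        omega
      obtain ⟨t, hts, htp⟩ := removed_proposed J s w m₁ hm₁acc hnotrem
      exact ⟨t, lt_trans hts hsN, htp⟩
    -- the set of times of proposals from B-women to Mset-men
    set TS : Finset ℕ := (Finset.range (Ntot J)).filter
      (fun t => ∃ w m, Bp w ∧ Mset m ∧ proposes J t w m) with hTS
    have hmemTS : ∀ t, t ∈ TS ↔ t < Ntot J ∧ ∃ w m, Bp w ∧ Mset m ∧ proposes J t w m := by
      intro t; simp [hTS]
    have hTSne : TS.Nonempty := by
      obtain ⟨m, hmMset, hmM₀⟩ := key2 w₀ hB0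
      obtain ⟨s, hsN, hsp⟩ := eng_origin J (Ntot J) m w₀ ((mem_DAout J).1 hmM₀)
      exact ⟨s, (hmemTS s).2 ⟨hsN, w₀, m, hB0, hmMset, hsp⟩⟩
    set tstar := TS.max' hTSne with htstar
    obtain ⟨htN, wh, mh, hBwh, hMmh, hprop⟩ := (hmemTS tstar).1 (TS.max'_mem hTSne)
    have hmax : ∀ t, t < Ntot J → (∃ w m, Bp w ∧ Mset m ∧ proposes J t w m) → t ≤ tstar := by
      intro t h1' h2'
      exact TS.le_max' t ((hmemTS t).2 ⟨h1', h2'⟩)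
    -- w_f : final partner of mh
    obtain ⟨w_f, hBw_f, hmhw_f⟩ := hcase mh hMmh
    have hengN : (run J (Ntot J)).eng mh = some w_f := (mem_DAout J).1 hmhw_f
    obtain ⟨t_f, ht_fN, hprop_f⟩ := eng_origin J (Ntot J) mh w_f hengN
    have ht_fle : t_f ≤ tstar := hmax t_f ht_fN ⟨w_f, mh, hBw_f, hMmh, hprop_f⟩
    -- the last proposal is exactly w_f's proposal to mh
    have hwheq : wh = w_f ∧ t_f = tstar := by
      rcases eq_or_lt_of_le ht_fle with heq | hlt
      · subst heq
        exact ⟨(proposes_det J hprop hprop_f).1, rfl⟩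
      · exfalso
        have hlock := lock_from_proposal J hprop_f hengN (lt_of_lt_of_le hlt (le_of_lt htN))
          tstar hlt (le_of_lt htN)
        have hfree : freeW (run J tstar) wh := (pick_some J hprop).1.1
        have hwhne : wh ≠ w_f := by
          intro h; subst h
          exact hfree mh hlock
        obtain ⟨m₀wh, hm₀Mset, hm₀M₀⟩ := key2 wh hBwh
        have hengwh : (run J (Ntot J)).eng m₀wh = some wh := (mem_DAout J).1 hm₀M₀
        have hm₀ne : m₀wh ≠ mh := by
          intro h; subst h
          rw [hengN] at hengwh
          injection hengwh with h'
          exact hwhne h'.symm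
        obtain ⟨t₀, ht₀N, hprop₀⟩ := eng_origin J (Ntot J) m₀wh wh hengwh
        have ht₀le : t₀ ≤ tstar := hmax t₀ ht₀N ⟨wh, m₀wh, hBwh, hm₀Mset, hprop₀⟩
        rcases eq_or_lt_of_le ht₀le with heq | hlt₀
        · subst heq
          exact hm₀ne (proposes_det J hprop₀ hprop).2
        · have := lock_from_proposal J hprop₀ hengwh (lt_of_lt_of_le hlt₀ (le_of_lt htN))
            tstar hlt₀ (le_of_lt htN)
          exact hfree m₀wh this
    obtain ⟨rfl, rfl⟩ : wh = w_f ∧ t_f = tstar := hwheq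
    -- now wh = w_f; rename: the proposal at tstar is (w_f, mh)
    -- v : M'-partner of mh
    obtain ⟨v, hBv, hvM'⟩ := hMmh
    have hvne : v ≠ wh := by
      intro h; subst h
      exact wPref_irrefl (Bp_strict v mh mh hBv hvM' hmhw_f)
    -- v proposed to mh at some t_v < tstar
    obtain ⟨m_v, hm_vMset, hm_vM₀⟩ := key2 v hBv
    obtain ⟨t_v, ht_vN, hprop_v⟩ := propM' v mh m_v hBv hvM' hm_vM₀
    have ht_vle : t_v ≤ tstar := hmax t_v ht_vN ⟨v, mh, hBv, ⟨v, hBv, hvM'⟩, hprop_v⟩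
    have ht_vlt : t_v < tstar := by
      rcases eq_or_lt_of_le ht_vle with heq | h
      · exfalso; subst heq
        exact hvne (proposes_det J hprop_v hprop).1
      · exact h
    -- mh engaged at tstar, say to w'
    have hmhacc : J.mAcc mh v := h1 (mh, v) hvM'
    obtain ⟨c₀, hc₀⟩ := eng_after_acceptable_proposal J hprop_v hmhacc
    obtain ⟨w', hw'eng, _⟩ := eng_improves' J (show t_v + 1 ≤ tstar from ht_vlt) hc₀
    have hfree : freeW (run J tstar) wh := (pick_some J hprop).1.1
    have hw'ne : w' ≠ wh := by
      intro h; subst h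
      exact hfree mh hw'eng
    -- w' ∉ B
    have hw'notB : ¬ Bp w' := by
      intro hBw'
      obtain ⟨m₂', hm₂Mset, hm₂M₀⟩ := key2 w' hBw'
      have heng₂ : (run J (Ntot J)).eng m₂' = some w' := (mem_DAout J).1 hm₂M₀
      have hm₂ne : m₂' ≠ mh := by
        intro h; subst h
        rw [hengN] at heng₂
        injection heng₂ with h'
        exact hw'ne h'.symm
      obtain ⟨t₂, ht₂N, hprop₂⟩ := eng_origin J (Ntot J) m₂' w' heng₂
      have ht₂le : t₂ ≤ tstar := hmax t₂ ht₂N ⟨w', m₂', hBw', hm₂Mset, hprop₂⟩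
      rcases eq_or_lt_of_le ht₂le with heq | hlt₂
      · subst heq
        exact hw'ne (proposes_det J hprop₂ hprop).1
      · have := lock_from_proposal J hprop₂ heng₂ (lt_of_lt_of_le hlt₂ (le_of_lt htN))
          tstar hlt₂ (le_of_lt htN)
        exact hm₂ne (eng_inj J tstar m₂' mh w' this hw'eng)
    have hw'new₀ : w' ≠ w₀ := fun h => hw'notB (h ▸ hB0)
    -- mutual acceptability of (mh, w')
    obtain ⟨hmhw'A, hw'mhA, _⟩ := eng_facts J tstar mh w' hw'eng
    -- mh strictly prefers w' to v
    have hmhpref : J.mPref mh w' v := by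
      have hvacc : mh ∈ accSet J v := (mem_accSet J).2 (Bp_wAcc v mh hBv hvM')
      have hnotrem : mh ∉ (run J tstar).rem v :=
        fun h => notMem_rem_succ J hprop_v (rem_antitone J ht_vlt v h)
      have hne : (run J tstar).eng mh ≠ some v := by
        rw [hw'eng]
        intro h; injection h with h
        exact hw'notB (h ▸ hBv)
      obtain ⟨c, hc, hcpref⟩ := rejected_better J hM tstar v mh hvacc hnotrem hne hmhacc
      rw [hw'eng] at hc
      injection hc with hc
      subst hc
      exact hcpref
    -- w' side
    refine ⟨mh, w', hw'new₀, hmhw'A, hw'mhA, ⟨v, hvM', hmhpref⟩, ?_⟩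
    by_cases hsg : ∀ m', (m', w') ∉ M'
    · exact Or.inl hsg
    · push_neg at hsg
      obtain ⟨m₁, hm₁M'⟩ := hsg
      have hw'm₁A : J.wAcc w' m₁ := h4 (m₁, w') hm₁M' hw'new₀
      have hside2 : ¬ (SMInst.wSingle M₀ w' ∨ ∃ m', (m', w') ∈ M₀ ∧ J.wPref w' m₁ m') := by
        intro hc
        exact hw'notB ⟨m₁, hm₁M', hw'm₁A, hc⟩
      rw [not_or] at hside2
      obtain ⟨hnsingle, hnpref⟩ := hside2
      rw [SMInst.wSingle] at hnsingle
      push_neg at hnsingle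
      obtain ⟨m₂, hm₂M₀⟩ := hnsingle
      have hnp₂ : ¬ J.wPref w' m₁ m₂ := by
        intro h
        exact hnpref ⟨m₂, hm₂M₀, h⟩
      -- timing : w' proposed to mh before tstar, and to m₂ after tstar
      obtain ⟨t_p, ht_p, hprop_p⟩ := eng_origin J tstar mh w' hw'eng
      have heng₂ : (run J (Ntot J)).eng m₂ = some w' := (mem_DAout J).1 hm₂M₀
      have hm₂ne : m₂ ≠ mh := by
        intro h; subst h
        rw [hengN] at heng₂
        injection heng₂ with h'
        exact hw'ne h'.symm
      obtain ⟨t₂, ht₂N, hprop₂⟩ := eng_origin J (Ntot J) m₂ w' heng₂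
      have ht₂gt : tstar < t₂ := by
        rcases lt_trichotomy t₂ tstar with h | h | h
        · exfalso
          have := lock_from_proposal J hprop₂ heng₂ (lt_of_lt_of_le h (le_of_lt htN))
            tstar h (le_of_lt htN)
          exact hm₂ne (eng_inj J tstar m₂ mh w' this hw'eng)
        · exfalso; subst h
          exact hw'ne (proposes_det J hprop₂ hprop).1
        · exact h
      have hpref₂ : J.wPref w' mh m₂ := proposes_order J hW hprop_p hprop₂ (lt_trans ht_p ht₂gt)
      refine Or.inr ⟨m₁, hm₁M', ?_⟩
      by_cases hm₁₂ : m₁ = m₂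
      · subst hm₁₂; exact hpref₂
      · have hw'm₂A : J.wAcc w' m₂ := (hM₀match.1 (m₂, w') hm₂M₀).2
        rcases wPref_total hW hw'm₂A hw'm₁A (fun h => hm₁₂ h.symm) with h | h
        · exact wPref_trans hpref₂ h
        · exact absurd h hnp₂
  · -- Case 1 : some Mset-man is not M₀-matched to any B-woman
    rw [not_forall] at hcase
    obtain ⟨m, hm⟩ := hcase
    rw [Classical.not_imp] at hm
    obtain ⟨hmMset, hnoex⟩ := hm
    have hno : ∀ w', Bp w' → (m, w') ∉ M₀ := by
      intro w' hBw' hmem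
      exact hnoex ⟨w', hBw', hmem⟩
    have hmM : ∃ w, Bp w ∧ (m, w) ∈ M' := hmMset
    obtain ⟨w, hBw, hmwM'⟩ := hmM
    have hBw' := hBw
    obtain ⟨mm, hmmM', hwA, hside⟩ := hBw
    have heq : (mm, w) = (m, w) := h3 _ hmmM' _ hmwM' rfl
    injection heq with hmm' _
    rw [hmm'] at hwA hside
    have hmAcc : J.mAcc m w := h1 (m, w) hmwM'
    have hmside : ¬ (SMInst.mSingle M₀ m ∨ ∃ w'', (m, w'') ∈ M₀ ∧ J.mPref m w w'') := by
      intro hc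
      exact no_block J hM hW m w ⟨hmAcc, hwA, hc, hside⟩
    rw [not_or] at hmside
    obtain ⟨hnsingle, hnpref⟩ := hmside
    rw [SMInst.mSingle] at hnsingle
    push_neg at hnsingle
    obtain ⟨w', hw'M₀⟩ := hnsingle
    push_neg at hnpref
    have hnp : ¬ J.mPref m w w' := fun h => hnpref w' hw'M₀ h
    have hw'notB : ¬ Bp w' := fun hB => hno w' hB hw'M₀
    have hw'new₀ : w' ≠ w₀ := fun h => hw'notB (h ▸ hB0)
    have hw'new : w' ≠ w := fun h => hw'notB (h ▸ hBw')
    have hmw'A : J.mAcc m w' := (hM₀match.1 (m, w') hw'M₀).1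
    have hw'mA : J.wAcc w' m := (hM₀match.1 (m, w') hw'M₀).2
    have hmpref : J.mPref m w' w := by
      rcases mPref_total hM hmw'A hmAcc hw'new with h | h
      · exact h
      · exact absurd h hnp
    refine ⟨m, w', hw'new₀, hmw'A, hw'mA, ⟨w, hmwM', hmpref⟩, ?_⟩
    by_cases hsg : ∀ m', (m', w') ∉ M'
    · exact Or.inl hsg
    · push_neg at hsg
      obtain ⟨m₁, hm₁M'⟩ := hsg
      have hw'm₁A : J.wAcc w' m₁ := h4 (m₁, w') hm₁M' hw'new₀
      have hside2 : ¬ (SMInst.wSingle M₀ w' ∨ ∃ m', (m', w') ∈ M₀ ∧ J.wPref w' m₁ m') := by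
        intro hc
        exact hw'notB ⟨m₁, hm₁M', hw'm₁A, hc⟩
      rw [not_or] at hside2
      obtain ⟨_, hnpref'⟩ := hside2
      have hnp₂ : ¬ J.wPref w' m₁ m := fun h => hnpref' ⟨m, hw'M₀, h⟩
      have hm₁ne : m ≠ m₁ := by
        intro h; subst h
        have := h2 _ hmwM' _ hm₁M' rfl
        injection this with _ h'
        exact hw'new h'.symm
      refine Or.inr ⟨m₁, hm₁M', ?_⟩
      rcases wPref_total hW hw'mA hw'm₁A hm₁ne with h | h
      · exact h
      · exact absurd h hnp₂

end
end DAdev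
namespace DAdev
open Classical Finset
noncomputable section

/-- tie-breaking by index -/
def tb {n : ℕ} (I : SMInst (Fin n) (Fin n)) : SMInst (Fin n) (Fin n) :=
  ⟨fun m w => (I.mpref m w).map (fun r => r * n + w.val),
   fun w m => (I.wpref w m).map (fun r => r * n + m.val)⟩

variable {n : ℕ} (I : SMInst (Fin n) (Fin n))

theorem tb_mAcc (m w : Fin n) : I.mAcc m w ↔ (tb I).mAcc m w := by
  simp [SMInst.mAcc, tb]

theorem tb_wAcc (w m : Fin n) : I.wAcc w m ↔ (tb I).wAcc w m := by
  simp [SMInst.wAcc, tb]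

theorem keylt {r s a b : ℕ} (h3 : r < s) (ha : a < n) : r * n + a < s * n + b := by
  have h4 : (r + 1) * n ≤ s * n := Nat.mul_le_mul_right n (Nat.succ_le_of_lt h3)
  rw [Nat.succ_mul] at h4
  omega

theorem tb_mPref {m : Fin n} {w w' : Fin n} : I.mPref m w w' → (tb I).mPref m w w' := by
  rintro ⟨r, s, h1, h2, h3⟩
  exact ⟨r * n + w.val, s * n + w'.val, by simp [tb, h1], by simp [tb, h2],
    keylt h3 w.isLt⟩

theorem tb_wPref {w : Fin n} {m m' : Fin n} : I.wPref w m m' → (tb I).wPref w m m' := by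
  rintro ⟨r, s, h1, h2, h3⟩
  exact ⟨r * n + m.val, s * n + m'.val, by simp [tb, h1], by simp [tb, h2],
    keylt h3 m.isLt⟩

theorem keymod {r s a b : ℕ} (ha : a < n) (hb : b < n) (h : r * n + a = s * n + b) :
    a = b := by
  have h1 : (r * n + a) % n = a := by
    rw [Nat.add_comm, Nat.add_mul_mod_self_right]
    exact Nat.mod_eq_of_lt ha
  have h2 : (s * n + b) % n = b := by
    rw [Nat.add_comm, Nat.add_mul_mod_self_right]
    exact Nat.mod_eq_of_lt hb
  rw [← h1, ← h2, h]

theorem tb_MStrict : (tb I).MStrict := by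
  intro m w w' heq hacc
  obtain ⟨r, hr⟩ := Option.isSome_iff_exists.1 hacc
  have hr' : (I.mpref m w).map (fun r => r * n + w.val) = some r := hr
  obtain ⟨a, ha, ha'⟩ := Option.map_eq_some_iff.1 hr'
  have : (tb I).mpref m w' = some r := by rw [← heq]; exact hr
  obtain ⟨b, hb, hb'⟩ := Option.map_eq_some_iff.1 this
  apply Fin.ext
  exact keymod w.isLt w'.isLt (by rw [ha', hb'])

theorem tb_WStrict : (tb I).WStrict := by
  intro w m m' heq hacc
  obtain ⟨r, hr⟩ := Option.isSome_iff_exists.1 hacc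
  have hr' : (I.wpref w m).map (fun r => r * n + m.val) = some r := hr
  obtain ⟨a, ha, ha'⟩ := Option.map_eq_some_iff.1 hr'
  have : (tb I).wpref w m' = some r := by rw [← heq]; exact hr
  obtain ⟨b, hb, hb'⟩ := Option.map_eq_some_iff.1 this
  apply Fin.ext
  exact keymod m.isLt m'.isLt (by rw [ha', hb'])

theorem tb_stable {M : Finset (Fin n × Fin n)} (h : (tb I).IsStable M) : I.IsStable M := by
  obtain ⟨⟨hacc, hinj1, hinj2⟩, hnb⟩ := h
  refine ⟨⟨?_, hinj1, hinj2⟩, ?_⟩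
  · intro p hp
    obtain ⟨h1, h2⟩ := hacc p hp
    exact ⟨(tb_mAcc I p.1 p.2).2 h1, (tb_wAcc I p.2 p.1).2 h2⟩
  · intro m w hb
    obtain ⟨h1, h2, h3, h4⟩ := hb
    refine hnb m w ⟨(tb_mAcc I m w).1 h1, (tb_wAcc I w m).1 h2, ?_, ?_⟩
    · rcases h3 with h | ⟨w', hw', hp⟩
      · exact Or.inl h
      · exact Or.inr ⟨w', hw', tb_mPref I hp⟩
    · rcases h4 with h | ⟨m', hm', hp⟩
      · exact Or.inl h
      · exact Or.inr ⟨m', hm', tb_wPref I hp⟩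

/-- every stable matching is at least half the size of any other stable matching -/
theorem approx {M Mopt : Finset (Fin n × Fin n)} (hst : I.IsStable M)
    (hopt : I.IsStable Mopt) : Mopt.card ≤ 2 * M.card := by
  classical
  have hcover : ∀ p ∈ Mopt, ∃ q ∈ M, p.1 = q.1 ∨ p.2 = q.2 := by
    intro p hp
    by_contra hc
    push_neg at hc
    have hms : SMInst.mSingle M p.1 := by
      intro w hw
      exact (hc (p.1, w) hw).1 rfl
    have hws : SMInst.wSingle M p.2 := by
      intro m hm
      exact (hc (m, p.2) hm).2 rfl
    obtain ⟨ha1, ha2⟩ := hopt.1.1 p hp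
    exact hst.2 p.1 p.2 ⟨ha1, ha2, Or.inl hms, Or.inl hws⟩
  have hsub : Mopt ⊆ M.biUnion (fun q => Mopt.filter (fun p => p.1 = q.1 ∨ p.2 = q.2)) := by
    intro p hp
    obtain ⟨q, hq, hd⟩ := hcover p hp
    exact Finset.mem_biUnion.2 ⟨q, hq, Finset.mem_filter.2 ⟨hp, hd⟩⟩
  calc Mopt.card ≤ (M.biUnion (fun q => Mopt.filter (fun p => p.1 = q.1 ∨ p.2 = q.2))).card :=
        Finset.card_le_card hsub
    _ ≤ ∑ q ∈ M, (Mopt.filter (fun p => p.1 = q.1 ∨ p.2 = q.2)).card :=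
        Finset.card_biUnion_le
    _ ≤ ∑ _q ∈ M, 2 := by
        apply Finset.sum_le_sum
        intro q _
        have h1 : (Mopt.filter (fun p => p.1 = q.1)).card ≤ 1 := by
          apply Finset.card_le_one.2
          intro a ha b hb
          rw [Finset.mem_filter] at ha hb
          exact hopt.1.2.1 a ha.1 b hb.1 (ha.2.trans hb.2.symm)
        have h2 : (Mopt.filter (fun p => p.2 = q.2)).card ≤ 1 := by
          apply Finset.card_le_one.2
          intro a ha b hb
          rw [Finset.mem_filter] at ha hb
          exact hopt.1.2.2 a ha.1 b hb.1 (ha.2.trans hb.2.symm)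
        calc (Mopt.filter (fun p => p.1 = q.1 ∨ p.2 = q.2)).card
            ≤ ((Mopt.filter (fun p => p.1 = q.1)) ∪ (Mopt.filter (fun p => p.2 = q.2))).card := by
              apply Finset.card_le_card
              rw [← Finset.filter_or]
          _ ≤ _ := Finset.card_union_le _ _
          _ ≤ 2 := by omega
    _ = 2 * M.card := by
        rw [Finset.sum_const, smul_eq_mul, mul_comm]

end
end DAdev
/-- MAX SMTI admits a woman-strategy-proof 2-approximate-stable mechanism. -/
theorem woman_sp_two_approx_stable_mechanism_SMTI :
    ∃ S : ∀ n : ℕ, SMInst (Fin n) (Fin n) → Finset (Fin n × Fin n),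
      (∀ (n : ℕ) (I : SMInst (Fin n) (Fin n)),
          I.IsStable (S n I) ∧
          ∀ Mopt : Finset (Fin n × Fin n), I.IsStable Mopt →
            Mopt.card ≤ 2 * (S n I).card) ∧
      ¬ ∃ (n : ℕ) (I I' : SMInst (Fin n) (Fin n)) (w : Fin n),
          SMInst.wDiffOnly I I' w ∧ I.wPrefMatching w (S n I') (S n I) := by
  classical
  refine ⟨fun n I => DAdev.DAout (DAdev.tb I), ?_, ?_⟩
  · intro n I
    have hst : I.IsStable (DAdev.DAout (DAdev.tb I)) :=
      DAdev.tb_stable I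
        (DAdev.DAout_stable (DAdev.tb I) (DAdev.tb_MStrict I) (DAdev.tb_WStrict I))
    exact ⟨hst, fun Mopt hopt => DAdev.approx I hst hopt⟩
  · rintro ⟨n, I, I', w₀, ⟨hmp, hwp⟩, hpref⟩
    set J : SMInst (Fin n) (Fin n) := DAdev.tb I with hJ
    set J' : SMInst (Fin n) (Fin n) := DAdev.tb I' with hJ'
    set M' : Finset (Fin n × Fin n) := DAdev.DAout J' with hM'
    set M₀ : Finset (Fin n × Fin n) := DAdev.DAout J with hM₀def
    have hmpref_eq : J.mpref = J'.mpref := by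
      funext m w
      simp [hJ, hJ', DAdev.tb, hmp]
    have hwpref_eq : ∀ w', w' ≠ w₀ → J.wpref w' = J'.wpref w' := by
      intro w' hne
      funext m
      simp [hJ, hJ', DAdev.tb, hwp w' hne]
    have hmAcc_eq : ∀ m w, J.mAcc m w ↔ J'.mAcc m w := by
      intro m w
      unfold SMInst.mAcc
      rw [hmpref_eq]
    have hwAcc_eq : ∀ w', w' ≠ w₀ → ∀ m, (J.wAcc w' m ↔ J'.wAcc w' m) := by
      intro w' hne m
      unfold SMInst.wAcc
      rw [hwpref_eq w' hne]
    have hmPref_eq : ∀ m w w', J.mPref m w w' ↔ J'.mPref m w w' := by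
      intro m w w'
      unfold SMInst.mPref
      rw [hmpref_eq]
    have hwPref_eq : ∀ w', w' ≠ w₀ → ∀ m m', (J.wPref w' m m' ↔ J'.wPref w' m m') := by
      intro w' hne m m'
      unfold SMInst.wPref
      rw [hwpref_eq w' hne]
    have hM'stable : J'.IsStable M' :=
      DAdev.DAout_stable J' (DAdev.tb_MStrict I') (DAdev.tb_WStrict I')
    have hmatch' := hM'stable.1
    -- transfer the manipulation hypothesis to the tie-broken instance
    have h5 : J.wPrefMatching w₀ M' M₀ := by
      obtain ⟨m, hmM', hwA, hside⟩ := hpref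
      refine ⟨m, hmM', (DAdev.tb_wAcc I w₀ m).1 hwA, ?_⟩
      rcases hside with h | ⟨m', hm', hp⟩
      · exact Or.inl h
      · exact Or.inr ⟨m', hm', DAdev.tb_wPref I hp⟩
    obtain ⟨m, w', hw'ne, hmA, hwA, ⟨w, hwM', hmp'⟩, hwside⟩ :=
      DAdev.blocking_lemma J (DAdev.tb_MStrict I) (DAdev.tb_WStrict I) w₀ M'
        (fun p hp => (hmAcc_eq p.1 p.2).2 (hmatch'.1 p hp).1)
        hmatch'.2.1 hmatch'.2.2
        (fun p hp hne => ((hwAcc_eq p.2 hne p.1)).2 (hmatch'.1 p hp).2)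
        h5
    -- the pair (m, w') blocks M' in J', contradicting its stability
    refine hM'stable.2 m w' ⟨(hmAcc_eq m w').1 hmA, (hwAcc_eq w' hw'ne m).1 hwA, ?_, ?_⟩
    · exact Or.inr ⟨w, hwM', (hmPref_eq m w' w).1 hmp'⟩
    · rcases hwside with h | ⟨m₁, hm₁, hp⟩
      · exact Or.inl h
      · exact Or.inr ⟨m₁, hm₁, (hwPref_eq w' hw'ne m m₁).1 hp⟩
end

section
/- For every ε > 0, MAX SMTI admits no man-strategy-proof (2−ε)-approximate-stable mechanism: every mechanism S on SMTI instances that is a (2−ε)-approximate-stable mechanism fails to be man-strategy-proof, i.e., there exist an instance I, a man m, and an instance I' differing from I only in m's preference list such that m prefers S(I') to S(I) with respect to m's list in I. -/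
namespace SMTIProof

open SMInst

instance decMPref {α β : Type} (I : SMInst α β) (m : α) (w w' : β) : Decidable (I.mPref m w w') :=
  decidable_of_iff (∃ r ∈ (I.mpref m w), ∃ r' ∈ (I.mpref m w'), r < r') <| by
    simp [SMInst.mPref, Option.mem_def]

instance decWPref {α β : Type} (I : SMInst α β) (w : β) (m m' : α) : Decidable (I.wPref w m m') :=
  decidable_of_iff (∃ r ∈ (I.wpref w m), ∃ r' ∈ (I.wpref w m'), r < r') <| by
    simp [SMInst.wPref, Option.mem_def]

instance decMAcc {α β : Type} (I : SMInst α β) (m : α) (w : β) : Decidable (I.mAcc m w) := by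
  unfold SMInst.mAcc; infer_instance
instance decWAcc {α β : Type} (I : SMInst α β) (w : β) (m : α) : Decidable (I.wAcc w m) := by
  unfold SMInst.wAcc; infer_instance
instance decMSingle {α β : Type} [DecidableEq α] [DecidableEq β] [Fintype β]
    (M : Finset (α × β)) (m : α) : Decidable (SMInst.mSingle M m) := by
  unfold SMInst.mSingle; infer_instance
instance decWSingle {α β : Type} [DecidableEq α] [DecidableEq β] [Fintype α]
    (M : Finset (α × β)) (w : β) : Decidable (SMInst.wSingle M w) := by
  unfold SMInst.wSingle; infer_instance
instance decBlocks {α β : Type} [DecidableEq α] [DecidableEq β] [Fintype α] [Fintype β]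
    (I : SMInst α β) (M : Finset (α × β)) (m : α) (w : β) : Decidable (I.Blocks M m w) := by
  unfold SMInst.Blocks; infer_instance
instance decIsMatching {α β : Type} [DecidableEq α] [DecidableEq β]
    (I : SMInst α β) (M : Finset (α × β)) : Decidable (I.IsMatching M) := by
  unfold SMInst.IsMatching; infer_instance
instance decIsStable {α β : Type} [DecidableEq α] [DecidableEq β] [Fintype α] [Fintype β]
    (I : SMInst α β) (M : Finset (α × β)) : Decidable (I.IsStable M) := by
  unfold SMInst.IsStable; infer_instance

/-- Base instance: both men prefer woman 1 to woman 0; both women indifferent. -/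
def mp0 : Fin 2 → Fin 2 → Option ℕ := fun _ w => if w = 1 then some 0 else some 1
def wp0 : Fin 2 → Fin 2 → Option ℕ := fun _ _ => some 0

def J0 : SMInst (Fin 2) (Fin 2) := ⟨mp0, wp0⟩
/-- Man 1 truncates to only woman 1. -/
def Jb : SMInst (Fin 2) (Fin 2) :=
  ⟨fun m w => if m = 1 then (if w = 1 then some 0 else none) else mp0 m w, wp0⟩
/-- Man 0 truncates to only woman 1. -/
def Ja : SMInst (Fin 2) (Fin 2) :=
  ⟨fun m w => if m = 0 then (if w = 1 then some 0 else none) else mp0 m w, wp0⟩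

def A0 : Finset (Fin 2 × Fin 2) := {(0,1),(1,0)}
def A1 : Finset (Fin 2 × Fin 2) := {(0,0),(1,1)}

lemma classify0 : ∀ M : Finset (Fin 2 × Fin 2), J0.IsStable M → M = A0 ∨ M = A1 := by decide

lemma classifyB : ∀ M : Finset (Fin 2 × Fin 2), Jb.IsStable M → M = A1 ∨ M.card ≤ 1 := by decide

lemma classifyA : ∀ M : Finset (Fin 2 × Fin 2), Ja.IsStable M → M = A0 ∨ M.card ≤ 1 := by decide

lemma stableA1b : Jb.IsStable A1 := by decide
lemma stableA0a : Ja.IsStable A0 := by decide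

lemma force {ε : ℝ} (hε : 0 < ε) {M good : Finset (Fin 2 × Fin 2)}
    (h2 : good.card = 2) (happ : (good.card : ℝ) ≤ (2 - ε) * M.card)
    (hM : M = good ∨ M.card ≤ 1) : M = good := by
  rcases hM with h | h
  · exact h
  · exfalso
    have hc0 : (0:ℝ) ≤ (M.card : ℝ) := Nat.cast_nonneg _
    have hc1 : (M.card : ℝ) ≤ 1 := by exact_mod_cast h
    rw [h2] at happ
    push_cast at happ
    have e1 : (0:ℝ) ≤ ε * (M.card : ℝ) := mul_nonneg hε.le hc0
    have h1 : (1:ℝ) ≤ (M.card : ℝ) := by nlinarith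
    have e2 : ε * 1 ≤ ε * (M.card : ℝ) := mul_le_mul_of_nonneg_left h1 hε.le
    nlinarith

end SMTIProof

open SMTIProof in
/-- For every `ε > 0`, MAX SMTI admits no man-strategy-proof `(2 - ε)`-approximate-stable
mechanism: every `(2 - ε)`-approximate-stable mechanism can be manipulated by some man. -/



theorem no_man_sp_sub_two_approx_stable_mechanism_SMTI (ε : ℝ) (hε : 0 < ε)
    (S : ∀ n : ℕ, SMInst (Fin n) (Fin n) → Finset (Fin n × Fin n))
    (happrox : ∀ (n : ℕ) (I : SMInst (Fin n) (Fin n)),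
        I.IsStable (S n I) ∧
        ∀ Mopt : Finset (Fin n × Fin n), I.IsStable Mopt →
          (Mopt.card : ℝ) ≤ (2 - ε) * (S n I).card) :
    ∃ (n : ℕ) (I I' : SMInst (Fin n) (Fin n)) (m : Fin n),
      SMInst.mDiffOnly I I' m ∧ I.mPrefMatching m (S n I') (S n I) := by
  classical
  refine ⟨2, ?_⟩
  have h0 := happrox 2 J0
  have hS0 : S 2 J0 = A0 ∨ S 2 J0 = A1 := classify0 _ h0.1
  rcases hS0 with h | h
  · -- S(J0) matches man 1 to woman 0; man 1 deviates to Jb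
    have hb := happrox 2 Jb
    have hSb : S 2 Jb = A1 :=
      force hε (by decide) (hb.2 A1 stableA1b) (classifyB _ hb.1)
    refine ⟨J0, Jb, 1, ⟨rfl, fun m' hm' => ?_⟩, ?_⟩
    · funext w
      show mp0 m' w = (if m' = 1 then (if w = 1 then some 0 else none) else mp0 m' w)
      rw [if_neg hm']
    · refine ⟨1, ?_, ?_, Or.inr ⟨0, ?_, ?_⟩⟩
      · rw [hSb]; decide
      · decide
      · rw [h]; decide
      · exact ⟨0, 1, rfl, rfl, Nat.zero_lt_one⟩
  · -- S(J0) matches man 0 to woman 0; man 0 deviates to Ja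
    have ha := happrox 2 Ja
    have hSa : S 2 Ja = A0 :=
      force hε (by decide) (ha.2 A0 stableA0a) (classifyA _ ha.1)
    refine ⟨J0, Ja, 0, ⟨rfl, fun m' hm' => ?_⟩, ?_⟩
    · funext w
      show mp0 m' w = (if m' = 0 then (if w = 1 then some 0 else none) else mp0 m' w)
      rw [if_neg hm']
    · refine ⟨1, ?_, ?_, Or.inr ⟨0, ?_, ?_⟩⟩
      · rw [hSa]; decide
      · decide
      · rw [h]; decide
      · exact ⟨0, 1, rfl, rfl, Nat.zero_lt_one⟩
end

section
/- For every ε > 0, MAX SMTI admits no woman-strategy-proof (2−ε)-approximate-stable mechanism: every mechanism S on SMTI instances that is a (2−ε)-approximate-stable mechanism fails to be woman-strategy-proof, i.e., there exist an instance I, a woman w, and an instance I' differing from I only in w's preference list such that w prefers S(I') to S(I) with respect to w's list in I. -/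
namespace SMInst
variable {α β : Type}

instance (I : SMInst α β) (m : α) (w : β) : Decidable (I.mAcc m w) := by
  unfold mAcc; infer_instance

instance (I : SMInst α β) (w : β) (m : α) : Decidable (I.wAcc w m) := by
  unfold wAcc; infer_instance

instance (I : SMInst α β) (m : α) (w w' : β) : Decidable (I.mPref m w w') :=
  decidable_of_iff ((I.mpref m w).isSome ∧ (I.mpref m w').isSome ∧
      (I.mpref m w).getD 0 < (I.mpref m w').getD 0) (by
    cases h1 : I.mpref m w <;> cases h2 : I.mpref m w' <;> simp [mPref, h1, h2])

instance (I : SMInst α β) (w : β) (m m' : α) : Decidable (I.wPref w m m') :=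
  decidable_of_iff ((I.wpref w m).isSome ∧ (I.wpref w m').isSome ∧
      (I.wpref w m).getD 0 < (I.wpref w m').getD 0) (by
    cases h1 : I.wpref w m <;> cases h2 : I.wpref w m' <;> simp [wPref, h1, h2])

variable [DecidableEq α] [DecidableEq β]

instance (I : SMInst α β) (M : Finset (α × β)) : Decidable (I.IsMatching M) := by
  unfold IsMatching; infer_instance

variable [Fintype α] [Fintype β]

instance (M : Finset (α × β)) (m : α) : Decidable (mSingle M m) := by
  unfold mSingle; infer_instance

instance (M : Finset (α × β)) (w : β) : Decidable (wSingle M w) := by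
  unfold wSingle; infer_instance

instance (I : SMInst α β) (M : Finset (α × β)) (m : α) (w : β) :
    Decidable (I.Blocks M m w) := by
  unfold Blocks; infer_instance

instance (I : SMInst α β) (M : Finset (α × β)) : Decidable (I.IsStable M) := by
  unfold IsStable; infer_instance

instance (I : SMInst α β) (w : β) (M' M : Finset (α × β)) :
    Decidable (I.wPrefMatching w M' M) := by
  unfold wPrefMatching; infer_instance

end SMInst

/-- Instance `Ia`: both men are indifferent between both women; woman 0 prefers
man 1 to man 0; woman 1 accepts only man 1. -/
def IaSMTI : SMInst (Fin 2) (Fin 2) :=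
  ⟨fun _ _ => some 0, fun w m => ![![some 1, some 0], ![none, some 0]] w m⟩

/-- Instance `Ib`: the mirror image of `Ia` with the two women swapped. -/
def IbSMTI : SMInst (Fin 2) (Fin 2) :=
  ⟨fun _ _ => some 0, fun w m => ![![none, some 0], ![some 1, some 0]] w m⟩

/-- Instance `Ic`: both women accept only man 1. -/
def IcSMTI : SMInst (Fin 2) (Fin 2) :=
  ⟨fun _ _ => some 0, fun w m => ![![none, some 0], ![none, some 0]] w m⟩

def MaSMTI : Finset (Fin 2 × Fin 2) := {(0,0),(1,1)}
def MbSMTI : Finset (Fin 2 × Fin 2) := {(0,1),(1,0)}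
def Mc1SMTI : Finset (Fin 2 × Fin 2) := {(1,0)}
def Mc2SMTI : Finset (Fin 2 × Fin 2) := {(1,1)}

lemma IaSMTI_stable_Ma : IaSMTI.IsStable MaSMTI := by decide
lemma IbSMTI_stable_Mb : IbSMTI.IsStable MbSMTI := by decide

lemma IaSMTI_forced : ∀ M : Finset (Fin 2 × Fin 2),
    IaSMTI.IsStable M → 2 ≤ M.card → M = MaSMTI := by decide

lemma IbSMTI_forced : ∀ M : Finset (Fin 2 × Fin 2),
    IbSMTI.IsStable M → 2 ≤ M.card → M = MbSMTI := by decide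

lemma IcSMTI_forced : ∀ M : Finset (Fin 2 × Fin 2),
    IcSMTI.IsStable M → M = Mc1SMTI ∨ M = Mc2SMTI := by decide

/-- From the approximation guarantee, the output on `Ia` (resp. `Ib`) has at least 2 pairs. -/
lemma card_ge_two_of_approx {ε : ℝ} (hε : 0 < ε) {c : ℕ}
    (h : (2 : ℝ) ≤ (2 - ε) * c) : 2 ≤ c := by
  by_contra hc
  push_neg at hc
  have hc1 : (c : ℝ) ≤ 1 := by exact_mod_cast Nat.lt_succ_iff.mp hc
  have hc0 : (0 : ℝ) ≤ (c : ℝ) := Nat.cast_nonneg c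
  nlinarith [mul_nonneg hε.le hc0, mul_le_mul_of_nonneg_left hc1 hε.le]

/-- For every `ε > 0`, MAX SMTI admits no woman-strategy-proof `(2 - ε)`-approximate-stable
mechanism: every `(2 - ε)`-approximate-stable mechanism can be manipulated by some woman. -/
theorem no_woman_sp_sub_two_approx_stable_mechanism_SMTI (ε : ℝ) (hε : 0 < ε)
    (S : ∀ n : ℕ, SMInst (Fin n) (Fin n) → Finset (Fin n × Fin n))
    (happrox : ∀ (n : ℕ) (I : SMInst (Fin n) (Fin n)),
        I.IsStable (S n I) ∧
        ∀ Mopt : Finset (Fin n × Fin n), I.IsStable Mopt →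
          (Mopt.card : ℝ) ≤ (2 - ε) * (S n I).card) :
    ∃ (n : ℕ) (I I' : SMInst (Fin n) (Fin n)) (w : Fin n),
      SMInst.wDiffOnly I I' w ∧ I.wPrefMatching w (S n I') (S n I) := by
  obtain ⟨hSa, hAa⟩ := happrox 2 IaSMTI
  obtain ⟨hSb, hAb⟩ := happrox 2 IbSMTI
  obtain ⟨hSc, _⟩ := happrox 2 IcSMTI
  have hMa2 : (MaSMTI.card : ℝ) = 2 := by norm_num [MaSMTI]
  have hMb2 : (MbSMTI.card : ℝ) = 2 := by norm_num [MbSMTI]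
  have hca : 2 ≤ (S 2 IaSMTI).card :=
    card_ge_two_of_approx hε (by
      have := hAa MaSMTI IaSMTI_stable_Ma
      rwa [hMa2] at this)
  have hcb : 2 ≤ (S 2 IbSMTI).card :=
    card_ge_two_of_approx hε (by
      have := hAb MbSMTI IbSMTI_stable_Mb
      rwa [hMb2] at this)
  have hSaEq : S 2 IaSMTI = MaSMTI := IaSMTI_forced _ hSa hca
  have hSbEq : S 2 IbSMTI = MbSMTI := IbSMTI_forced _ hSb hcb
  rcases IcSMTI_forced _ hSc with hScEq | hScEq
  · refine ⟨2, IaSMTI, IcSMTI, 0, ⟨rfl, ?_⟩, ?_⟩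
    · intro w' hw'
      have hw1 : w' = 1 := by omega
      subst hw1; rfl
    · rw [hSaEq, hScEq]; decide
  · refine ⟨2, IbSMTI, IcSMTI, 1, ⟨rfl, ?_⟩, ?_⟩
    · intro w' hw'
      have hw1 : w' = 0 := by omega
      subst hw1; rfl
    · rw [hSbEq, hScEq]; decide
end

section
/- For every ε > 0, MAX SMTI-1TM admits no man-strategy-proof (1.5−ε)-approximate-stable mechanism: every mechanism S on SMTI-1TM instances that is a (1.5−ε)-approximate-stable mechanism fails to be man-strategy-proof, i.e., there exist an instance I, a man m, and an instance I' differing from I only in m's preference list such that m prefers S(I') to S(I) with respect to m's list in I. -/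
namespace ManipAux

open SMInst

/-- Women's preference lists (fixed environment): `w0` accepts only `m0`;
`w1` and `w2` both rank `m1 > m0 > m2`. -/
def wP : Fin 3 → Fin 3 → Option ℕ :=
  ![![some 0, none, none],
    ![some 1, some 0, some 2],
    ![some 1, some 0, some 2]]

/-- Environment men's lists: `m1` and `m2` are tied between `w1` and `w2`. -/
def envM : Fin 3 → Fin 3 → Option ℕ :=
  ![![none, none, none],
    ![none, some 0, some 0],
    ![none, some 0, some 0]]

/-- The instance in which man `0` has list `L` and everything else is the fixed
environment. -/
def inst (L : Fin 3 → Option ℕ) : SMInst (Fin 3) (Fin 3) where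
  mpref := fun m => if m = 0 then L else envM m
  wpref := wP

def L1 : Fin 3 → Option ℕ := ![some 1, some 0, some 2]
def L2 : Fin 3 → Option ℕ := ![some 1, some 2, some 0]
def L3 : Fin 3 → Option ℕ := ![some 2, some 1, some 0]

/-- Boolean comparison on option ranks. -/
def oLT : Option ℕ → Option ℕ → Bool
  | some r, some r' => decide (r < r')
  | _, _ => false

instance (I : SMInst (Fin 3) (Fin 3)) (m w : Fin 3) : Decidable (I.mAcc m w) :=
  decidable_of_iff ((I.mpref m w).isSome = true) Iff.rfl

instance (I : SMInst (Fin 3) (Fin 3)) (w m : Fin 3) : Decidable (I.wAcc w m) :=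
  decidable_of_iff ((I.wpref w m).isSome = true) Iff.rfl

instance (I : SMInst (Fin 3) (Fin 3)) (M : Finset (Fin 3 × Fin 3)) :
    Decidable (I.IsMatching M) :=
  @instDecidableAnd _ _ inferInstance (@instDecidableAnd _ _ inferInstance inferInstance)

instance (I : SMInst (Fin 3) (Fin 3)) (M : Finset (Fin 3 × Fin 3)) (m w : Fin 3) :
    Decidable (I.mAcc m w ∧ I.wAcc w m ∧
      ((∀ w', (m, w') ∉ M) ∨ ∃ w', (m, w') ∈ M ∧ oLT (I.mpref m w) (I.mpref m w') = true) ∧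
      ((∀ m', (m', w) ∉ M) ∨ ∃ m', (m', w) ∈ M ∧ oLT (I.wpref w m) (I.wpref w m') = true)) :=
  @instDecidableAnd _ _ inferInstance (@instDecidableAnd _ _ inferInstance
    (@instDecidableAnd _ _ inferInstance inferInstance))

def P1 : Finset (Fin 3 × Fin 3) := {(0, 0), (1, 1), (2, 2)}
def P2 : Finset (Fin 3 × Fin 3) := {(0, 0), (1, 2), (2, 1)}

lemma oneTM_inst (L : Fin 3 → Option ℕ) : (inst L).OneTM := by
  have h : ∀ w m m' : Fin 3, wP w m = wP w m' → (wP w m).isSome → m = m' := by decide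
  exact h

lemma diffOnly (L L' : Fin 3 → Option ℕ) : SMInst.mDiffOnly (inst L) (inst L') 0 := by
  refine ⟨rfl, fun m' hm' => ?_⟩
  show (if m' = 0 then L else envM m') = (if m' = 0 then L' else envM m')
  rw [if_neg hm', if_neg hm']

/-- In any matching of any `inst L` of size at least 3, man `0` is matched
to woman `0` (since woman `0` accepts only him and all women are matched). -/
lemma mem00 (L : Fin 3 → Option ℕ) (M : Finset (Fin 3 × Fin 3))
    (hm : (inst L).IsMatching M) (hc : 3 ≤ M.card) :
    ((0 : Fin 3), (0 : Fin 3)) ∈ M := by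
  have hinj : Set.InjOn Prod.snd M := fun p hp q hq h => hm.2.2 p hp q hq h
  have himg : (M.image Prod.snd).card = M.card := Finset.card_image_of_injOn hinj
  have hle : (M.image Prod.snd).card ≤ 3 := by
    calc (M.image Prod.snd).card ≤ Fintype.card (Fin 3) := Finset.card_le_univ _
    _ = 3 := by simp
  have huniv : M.image Prod.snd = Finset.univ :=
    Finset.eq_univ_of_card _ (by simp only [Fintype.card_fin]; omega)
  have h0 : (0 : Fin 3) ∈ M.image Prod.snd := huniv ▸ Finset.mem_univ _
  obtain ⟨p, hp, hp2⟩ := Finset.mem_image.mp h0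
  have hacc := (hm.1 p hp).2
  rw [hp2] at hacc
  have hkey : ∀ m : Fin 3, (wP 0 m).isSome → m = 0 := by decide
  have hp1 : p.1 = 0 := hkey p.1 hacc
  have hpe : p = ((0 : Fin 3), (0 : Fin 3)) := Prod.ext hp1 hp2
  rwa [hpe] at hp

lemma oLT_iff (a b : Option ℕ) :
    (∃ r r', a = some r ∧ b = some r' ∧ r < r') ↔ oLT a b = true := by
  cases a <;> cases b <;> simp [oLT]

lemma not_blocks_of (I : SMInst (Fin 3) (Fin 3)) (M : Finset (Fin 3 × Fin 3))
    (key : ∀ m w, ¬ (I.mAcc m w ∧ I.wAcc w m ∧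
      ((∀ w', (m, w') ∉ M) ∨ ∃ w', (m, w') ∈ M ∧ oLT (I.mpref m w) (I.mpref m w') = true) ∧
      ((∀ m', (m', w) ∉ M) ∨ ∃ m', (m', w) ∈ M ∧ oLT (I.wpref w m) (I.wpref w m') = true))) :
    ∀ m w, ¬ I.Blocks M m w := by
  intro m w hb
  obtain ⟨h1, h2, h3, h4⟩ := hb
  refine key m w ⟨h1, h2, ?_, ?_⟩
  · rcases h3 with h | ⟨w', hw', hp⟩
    · exact Or.inl h
    · exact Or.inr ⟨w', hw', (oLT_iff _ _).mp hp⟩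
  · rcases h4 with h | ⟨m', hm', hp⟩
    · exact Or.inl h
    · exact Or.inr ⟨m', hm', (oLT_iff _ _).mp hp⟩

lemma stableP1 : (inst L1).IsStable P1 :=
  ⟨by decide, not_blocks_of _ _ (by decide)⟩

lemma stableP2 : (inst L2).IsStable P2 :=
  ⟨by decide, not_blocks_of _ _ (by decide)⟩

/-- In every stable matching of the instance `inst L3`, man `0` is matched to
woman `1` or to woman `2`. -/
lemma I3_partner (M : Finset (Fin 3 × Fin 3)) (h : (inst L3).IsStable M) :
    ((0 : Fin 3), (1 : Fin 3)) ∈ M ∨ ((0 : Fin 3), (2 : Fin 3)) ∈ M := by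
  by_contra hcon
  push_neg at hcon
  obtain ⟨h1, h2⟩ := hcon
  obtain ⟨hmatch, hstab⟩ := h
  by_cases h0 : SMInst.mSingle M 0
  · -- man 0 single, hence woman 0 single, so (0,0) blocks
    have hw0 : SMInst.wSingle M 0 := by
      intro m hm0
      have hacc := (hmatch.1 (m, 0) hm0).2
      have hkey : ∀ m : Fin 3, (wP 0 m).isSome → m = 0 := by decide
      have : m = 0 := hkey m hacc
      subst this
      exact h0 0 hm0
    exact hstab 0 0 ⟨by decide, by decide, Or.inl h0, Or.inl hw0⟩
  · simp only [SMInst.mSingle, not_forall, not_not] at h0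
    obtain ⟨w, hw⟩ := h0
    fin_cases w
    · -- (0,0) ∈ M
      by_cases hw2 : SMInst.wSingle M 2
      · exact hstab 0 2 ⟨by decide, by decide,
          Or.inr ⟨0, hw, 0, 2, by decide, by decide, by norm_num⟩, Or.inl hw2⟩
      · simp only [SMInst.wSingle, not_forall, not_not] at hw2
        obtain ⟨m2, hm2⟩ := hw2
        fin_cases m2
        · exact h2 hm2
        · -- (1,2) ∈ M; analyze woman 1
          by_cases hw1 : SMInst.wSingle M 1
          · exact hstab 0 1 ⟨by decide, by decide,
              Or.inr ⟨0, hw, 1, 2, by decide, by decide, by norm_num⟩, Or.inl hw1⟩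
          · simp only [SMInst.wSingle, not_forall, not_not] at hw1
            obtain ⟨m1, hm1⟩ := hw1
            fin_cases m1
            · exact h1 hm1
            · have := hmatch.2.1 (1, 1) hm1 (1, 2) hm2 rfl
              exact absurd this (by decide)
            · exact hstab 0 1 ⟨by decide, by decide,
                Or.inr ⟨0, hw, 1, 2, by decide, by decide, by norm_num⟩,
                Or.inr ⟨2, hm1, 1, 2, by decide, by decide, by norm_num⟩⟩
        · -- (2,2) ∈ M; (0,2) blocks
          exact hstab 0 2 ⟨by decide, by decide,
            Or.inr ⟨0, hw, 0, 2, by decide, by decide, by norm_num⟩,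
            Or.inr ⟨2, hm2, 1, 2, by decide, by decide, by norm_num⟩⟩
    · exact h1 hw
    · exact h2 hw

lemma card_ge3 (ε : ℝ) (hε : 0 < ε) (k : ℕ) (h : (3 : ℝ) ≤ (3 / 2 - ε) * k) :
    3 ≤ k := by
  by_contra hk
  push_neg at hk
  have hk2 : (k : ℝ) ≤ 2 := by exact_mod_cast Nat.lt_succ_iff.mp hk
  rcases Nat.eq_zero_or_pos k with h0 | h0
  · subst h0; norm_num at h
  · have h1 : (1 : ℝ) ≤ (k : ℝ) := by exact_mod_cast h0
    nlinarith [mul_le_mul_of_nonneg_left h1 (le_of_lt hε)]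

end ManipAux

/-- For every `ε > 0`, MAX SMTI-1TM admits no man-strategy-proof
`(1.5 - ε)`-approximate-stable mechanism: every `(1.5 - ε)`-approximate-stable
mechanism can be manipulated by some man. -/
theorem no_man_sp_sub_one_point_five_approx_stable_mechanism_SMTI1TM (ε : ℝ) (hε : 0 < ε)
    (S : ∀ n : ℕ, SMInst (Fin n) (Fin n) → Finset (Fin n × Fin n))
    (happrox : ∀ (n : ℕ) (I : SMInst (Fin n) (Fin n)), I.OneTM →
        I.IsStable (S n I) ∧
        ∀ Mopt : Finset (Fin n × Fin n), I.IsStable Mopt →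
          (Mopt.card : ℝ) ≤ (3 / 2 - ε) * (S n I).card) :
    ∃ (n : ℕ) (I I' : SMInst (Fin n) (Fin n)) (m : Fin n),
      I.OneTM ∧ I'.OneTM ∧ SMInst.mDiffOnly I I' m ∧
      I.mPrefMatching m (S n I') (S n I) := by
  obtain ⟨hst3, _⟩ := happrox 3 (ManipAux.inst ManipAux.L3) (ManipAux.oneTM_inst _)
  rcases ManipAux.I3_partner _ hst3 with h1 | h2
  · obtain ⟨hst1, hratio⟩ := happrox 3 (ManipAux.inst ManipAux.L1) (ManipAux.oneTM_inst _)
    have hPopt := hratio ManipAux.P1 ManipAux.stableP1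
    have hPcard : ManipAux.P1.card = 3 := by decide
    rw [hPcard] at hPopt
    have hcard : 3 ≤ (S 3 (ManipAux.inst ManipAux.L1)).card :=
      ManipAux.card_ge3 ε hε _ (by exact_mod_cast hPopt)
    exact ⟨3, ManipAux.inst ManipAux.L1, ManipAux.inst ManipAux.L3, 0,
      ManipAux.oneTM_inst _, ManipAux.oneTM_inst _, ManipAux.diffOnly _ _,
      1, h1, by decide,
      Or.inr ⟨0, ManipAux.mem00 _ _ hst1.1 hcard, 0, 1, by decide, by decide, by norm_num⟩⟩
  · obtain ⟨hst2, hratio⟩ := happrox 3 (ManipAux.inst ManipAux.L2) (ManipAux.oneTM_inst _)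
    have hPopt := hratio ManipAux.P2 ManipAux.stableP2
    have hPcard : ManipAux.P2.card = 3 := by decide
    rw [hPcard] at hPopt
    have hcard : 3 ≤ (S 3 (ManipAux.inst ManipAux.L2)).card :=
      ManipAux.card_ge3 ε hε _ (by exact_mod_cast hPopt)
    exact ⟨3, ManipAux.inst ManipAux.L2, ManipAux.inst ManipAux.L3, 0,
      ManipAux.oneTM_inst _, ManipAux.oneTM_inst _, ManipAux.diffOnly _ _,
      2, h2, by decide,
      Or.inr ⟨0, ManipAux.mem00 _ _ hst2.1 hcard, 0, 1, by decide, by decide, by norm_num⟩⟩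
end
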